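/- arXiv:0704.2824 — 10 statements merged into one kernel-verified Lean document; each statement's English description precedes it below -/
import Mathlib

section
/- Let K be a totally real number field and let L be the Galois closure of K over ℚ. If f ∈ ℚ[x₁,…,xₙ] is a sum of m squares of polynomials in K[x₁,…,xₙ], then f is a sum of 4·m·2^{[L:ℚ]+1}·binomial([L:ℚ]+1, 2) squares of polynomials in ℚ[x₁,…,xₙ]. -/
lemma rat_four_sq (q : ℚ) (hq : 0 ≤ q) : ∃ a : Fin 4 → ℚ, q = ∑ t, a t ^ 2 := by
  obtain ⟨a, b, c, d, h⟩ := Nat.sum_four_squares (q.num.toNat * q.den)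
  refine ⟨![a / q.den, b / q.den, c / q.den, d / q.den], ?_⟩
  have hden : (q.den : ℚ) ≠ 0 := by exact_mod_cast q.den_nz
  have hnum : ((q.num.toNat : ℕ) : ℚ) = (q.num : ℚ) := by
    exact_mod_cast congrArg (fun z : ℤ => (z : ℚ)) (Int.toNat_of_nonneg (Rat.num_nonneg.mpr hq))
  have hh : ((a:ℚ)^2 + b^2 + c^2 + d^2) = (q.num.toNat : ℚ) * q.den := by
    exact_mod_cast congrArg (fun x : ℕ => (x:ℚ)) h
  have hq' : q * q.den = q.num := Rat.mul_den_eq_num q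
  rw [Fin.sum_univ_four]
  simp only [Matrix.cons_val_zero, Matrix.cons_val_one, Matrix.head_cons,
    Matrix.cons_val_two, Matrix.tail_cons, Matrix.cons_val_three]
  rw [div_pow, div_pow, div_pow, div_pow, ← add_div, ← add_div,
    ← add_div, hh, hnum, eq_div_iff (pow_ne_zero 2 hden)]
  linear_combination (q.den : ℚ) * hq'

lemma sos_of_nonneg_qf {V : Type*} [AddCommGroup V] [Module ℚ V] [FiniteDimensional ℚ V]
    (Q : QuadraticForm ℚ V) (hQ : ∀ x, 0 ≤ Q x) :
    ∃ ℓ : Fin (Module.finrank ℚ V) × Fin 4 → V →ₗ[ℚ] ℚ, ∀ x, Q x = ∑ t, ℓ t x ^ 2 := by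
  obtain ⟨w, ⟨φ⟩⟩ := Q.equivalent_weightedSumSquares
  have hkey : ∀ x, Q x = ∑ i, w i * (φ x i) ^ 2 := by
    intro x
    rw [← φ.map_app x, QuadraticMap.weightedSumSquares_apply]
    exact Finset.sum_congr rfl fun i _ => by rw [smul_eq_mul, sq]
  have hw : ∀ i, 0 ≤ w i := by
    intro i
    have := hkey (φ.toLinearEquiv.symm (Pi.single i 1))
    have h2 : φ (φ.toLinearEquiv.symm (Pi.single i 1)) = Pi.single i 1 := by
      rw [← QuadraticMap.IsometryEquiv.coe_toLinearEquiv]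
      exact φ.toLinearEquiv.apply_symm_apply _
    rw [h2] at this
    simp only [Pi.single_apply] at this
    rw [Finset.sum_eq_single i (fun j _ hj => by simp [hj]) (by simp)] at this
    simp only [↓reduceIte, one_pow, mul_one] at this
    linarith [hQ (φ.toLinearEquiv.symm (Pi.single i 1))]
  choose a ha using fun i => rat_four_sq (w i) (hw i)
  refine ⟨fun t => a t.1 t.2 • ((LinearMap.proj t.1).comp
      (φ.toLinearEquiv : V →ₗ[ℚ] (Fin (Module.finrank ℚ V) → ℚ))), fun x => ?_⟩
  rw [hkey x, Fintype.sum_prod_type]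
  refine Finset.sum_congr rfl fun i _ => ?_
  rw [ha i, Finset.sum_mul]
  refine Finset.sum_congr rfl fun k _ => ?_
  simp only [LinearMap.smul_apply, LinearMap.comp_apply, LinearMap.proj_apply, smul_eq_mul]
  have : (φ.toLinearEquiv : V →ₗ[ℚ] _) x = φ x := by
    rw [← QuadraticMap.IsometryEquiv.coe_toLinearEquiv]; rfl
  rw [this]; ring

lemma trace_sq_nonneg (K : IntermediateField ℚ ℝ) [FiniteDimensional ℚ K]
    (htr : ∀ φ : K →+* ℂ, ∀ x : K, (φ x).im = 0) (x : K) :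
    0 ≤ Algebra.trace ℚ K (x * x) := by
  have h := trace_eq_sum_embeddings (K := ℚ) (L := ↥K) ℂ (x := x * x)
  have h2 : ((Algebra.trace ℚ K (x * x) : ℚ) : ℂ).re = Algebra.trace ℚ K (x * x) := by
    simp
  have h3 : (algebraMap ℚ ℂ (Algebra.trace ℚ K (x * x))) = ((Algebra.trace ℚ K (x * x) : ℚ) : ℂ) := by
    norm_num [eq_ratCast]
  rw [h3] at h
  have := congrArg Complex.re h
  rw [h2] at this
  have h4 : (0:ℝ) ≤ ((Algebra.trace ℚ K (x * x) : ℚ) : ℝ) := by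
    rw [this, Complex.re_sum]
    apply Finset.sum_nonneg
    intro σ _
    have him : (σ x).im = 0 := htr (σ : ↥K →+* ℂ) x
    rw [map_mul, Complex.mul_re, him]
    simp [mul_self_nonneg]
  exact_mod_cast h4

noncomputable def cmap {n : ℕ} {K : Type*} [Field K] [Algebra ℚ K] (ℓ : K →ₗ[ℚ] ℚ)
    (p : MvPolynomial (Fin n) K) : MvPolynomial (Fin n) ℚ :=
  AddMonoidAlgebra.ofCoeff (Finsupp.mapRange ℓ ℓ.map_zero (AddMonoidAlgebra.coeff p))

lemma cmap_coeff {n : ℕ} {K : Type*} [Field K] [Algebra ℚ K] (ℓ : K →ₗ[ℚ] ℚ)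
    (p : MvPolynomial (Fin n) K) (m : Fin n →₀ ℕ) :
    MvPolynomial.coeff m (cmap ℓ p) = ℓ (MvPolynomial.coeff m p) :=
  Finsupp.mapRange_apply (hf := ℓ.map_zero)

lemma trace_coeff_sq {n : ℕ} {K : Type*} [Field K] [Algebra ℚ K] {ι : Type*} [Fintype ι]
    (tr : K →ₗ[ℚ] ℚ) (ℓ : ι → (K →ₗ[ℚ] ℚ))
    (hbil : ∀ x y, tr (x * y) = ∑ t, ℓ t x * ℓ t y)
    (P : MvPolynomial (Fin n) K) (μ : Fin n →₀ ℕ) :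
    tr (MvPolynomial.coeff μ (P ^ 2)) = ∑ t, MvPolynomial.coeff μ ((cmap (ℓ t) P) ^ 2) := by
  simp only [sq, MvPolynomial.coeff_mul, map_sum, hbil, cmap_coeff]
  rw [Finset.sum_comm]

lemma pad_squares {n N : ℕ} {ι : Type*} [Fintype ι] (h : Fintype.card ι ≤ N)
    (g : ι → MvPolynomial (Fin n) ℚ) :
    ∃ q : Fin N → MvPolynomial (Fin n) ℚ, ∑ i, g i ^ 2 = ∑ j, q j ^ 2 := by
  have hcard : Fintype.card (ι ⊕ Fin (N - Fintype.card ι)) = N := by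
    simp [Fintype.card_sum]; omega
  let e : (ι ⊕ Fin (N - Fintype.card ι)) ≃ Fin N := Fintype.equivFinOfCardEq hcard
  refine ⟨fun j => Sum.elim g 0 (e.symm j), ?_⟩
  calc ∑ i, g i ^ 2 = ∑ s : ι ⊕ Fin (N - Fintype.card ι), Sum.elim g 0 s ^ 2 := by
        rw [Fintype.sum_sum_type]; simp
    _ = ∑ j : Fin N, Sum.elim g 0 (e.symm j) ^ 2 :=
        (Fintype.sum_equiv e.symm (fun j => Sum.elim g 0 (e.symm j) ^ 2)
          (fun s => Sum.elim g 0 s ^ 2) (fun j => rfl)).symm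

/-- Sums of squares over a totally real number field `K` (realized as a subfield of `ℝ`,
with Galois closure `L = normalClosure ℚ K ℝ`) are rational sums of squares:
if `f ∈ ℚ[x₁,…,xₙ]` is a sum of `m` squares in `K[x₁,…,xₙ]`, then `f` is a sum of
`4·m·2^([L:ℚ]+1)·C([L:ℚ]+1, 2)` squares in `ℚ[x₁,…,xₙ]`. -/
theorem stmt_1 (n m : ℕ) (K : IntermediateField ℚ ℝ) [FiniteDimensional ℚ K]
    (htotallyreal : ∀ φ : K →+* ℂ, ∀ x : K, (φ x).im = 0)
    (f : MvPolynomial (Fin n) ℚ) (p : Fin m → MvPolynomial (Fin n) K)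
    (hf : MvPolynomial.map (algebraMap ℚ K) f = ∑ i, (p i) ^ 2) :
    ∃ q : Fin (4 * m * 2 ^ (Module.finrank ℚ (IntermediateField.normalClosure ℚ K ℝ) + 1) *
        (Module.finrank ℚ (IntermediateField.normalClosure ℚ K ℝ) + 1).choose 2) →
        MvPolynomial (Fin n) ℚ,
      f = ∑ i, (q i) ^ 2 := by
  classical
  set d := Module.finrank ℚ K with hd
  set D := Module.finrank ℚ (IntermediateField.normalClosure ℚ K ℝ) with hD
  -- the trace quadratic form is nonnegative
  let Q : QuadraticForm ℚ K := (Algebra.traceForm ℚ K).toQuadraticMap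
  have hQapp : ∀ x : K, Q x = Algebra.trace ℚ K (x * x) := fun x => by
    simp [Q, LinearMap.BilinMap.toQuadraticMap_apply, Algebra.traceForm_apply]
  have hQ : ∀ x, 0 ≤ Q x := fun x => by
    rw [hQapp]; exact trace_sq_nonneg K htotallyreal x
  obtain ⟨ℓ, hℓ⟩ := sos_of_nonneg_qf Q hQ
  have htr : ∀ x : K, Algebra.trace ℚ K (x * x) = ∑ t, ℓ t x ^ 2 := fun x => by
    rw [← hQapp]; exact hℓ x
  -- polarization
  have hbil : ∀ x y : K, Algebra.trace ℚ K (x * y) = ∑ t, ℓ t x * ℓ t y := by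
    intro x y
    have e1 := htr x
    have e2 := htr y
    have e3 := htr (x + y)
    have hexp : (x + y) * (x + y) = x * x + (y * y + (x * y + x * y)) := by ring
    rw [hexp, map_add, map_add, map_add] at e3
    simp only [map_add, add_sq, mul_assoc, Finset.sum_add_distrib] at e3
    have e4 : ∑ t, (2 * (ℓ t x * ℓ t y)) = 2 * ∑ t, ℓ t x * ℓ t y := by
      rw [Finset.mul_sum]
    linarith
  -- main identity: d • f = ∑ i ∑ t (cmap (ℓ t) (p i))²
  have hmain : ∀ μ, (d : ℚ) * MvPolynomial.coeff μ f
      = ∑ i, ∑ t, MvPolynomial.coeff μ ((cmap (ℓ t) (p i)) ^ 2) := by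
    intro μ
    have h1 : algebraMap ℚ K (MvPolynomial.coeff μ f)
        = MvPolynomial.coeff μ (∑ i, (p i) ^ 2) := by
      rw [← hf, MvPolynomial.coeff_map]
    have h2 := congrArg (Algebra.trace ℚ K) h1
    rw [Algebra.trace_algebraMap] at h2
    rw [MvPolynomial.coeff_sum, map_sum] at h2
    simp only [trace_coeff_sq (Algebra.trace ℚ K) ℓ hbil] at h2
    rw [← h2, nsmul_eq_mul, hd]
  have hd0 : 0 < d := Module.finrank_pos
  have hdQ : (d : ℚ) ≠ 0 := by positivity
  -- f as an explicit sum of squares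
  have hf2 : f = ∑ z : Fin m × ((Fin d × Fin 4) × Fin d),
      (MvPolynomial.C ((1:ℚ)/d) * cmap (ℓ z.2.1) (p z.1)) ^ 2 := by
    apply MvPolynomial.ext
    intro μ
    rw [Fintype.sum_prod_type]
    have : ∀ i : Fin m, ∑ z : (Fin d × Fin 4) × Fin d,
        MvPolynomial.coeff μ ((MvPolynomial.C ((1:ℚ)/d) * cmap (ℓ z.1) (p i)) ^ 2)
        = (1/(d:ℚ)) * ∑ t, MvPolynomial.coeff μ ((cmap (ℓ t) (p i)) ^ 2) := by
      intro i
      rw [Fintype.sum_prod_type, Finset.mul_sum]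
      refine Finset.sum_congr rfl fun t _ => ?_
      show ∑ _y : Fin d,
          MvPolynomial.coeff μ ((MvPolynomial.C ((1:ℚ)/d) * cmap (ℓ t) (p i)) ^ 2) = _
      rw [Finset.sum_const, Finset.card_univ, Fintype.card_fin]
      rw [mul_pow, ← MvPolynomial.C_pow, MvPolynomial.coeff_C_mul, nsmul_eq_mul]
      field_simp
    simp only [MvPolynomial.coeff_sum]
    rw [Finset.sum_congr rfl (fun i _ => this i), ← Finset.mul_sum, ← hmain μ]
    field_simp
  -- counting
  have hdD : d ≤ D := by
    have hle : K ≤ IntermediateField.normalClosure ℚ K ℝ := IntermediateField.le_normalClosure K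
    have hle' : K.toSubmodule ≤ (IntermediateField.normalClosure ℚ K ℝ).toSubmodule := fun x hx => hle hx
    haveI : Module.Finite ℚ (Subalgebra.toSubmodule (IntermediateField.normalClosure ℚ K ℝ).toSubalgebra) :=
      inferInstanceAs (FiniteDimensional ℚ (IntermediateField.normalClosure ℚ K ℝ))
    exact Submodule.finrank_mono hle'
  have hcount : Fintype.card (Fin m × ((Fin d × Fin 4) × Fin d))
      ≤ 4 * m * 2 ^ (D + 1) * (D + 1).choose 2 := by
    simp only [Fintype.card_prod, Fintype.card_fin]
    have h2c : 2 * ((D + 1).choose 2) = (D + 1) * D := by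
      rw [Nat.choose_two_right]
      simp only [Nat.add_sub_cancel]
      have hdvd : 2 ∣ (D + 1) * D := by
        rw [mul_comm]; exact (Nat.even_mul_succ_self D).two_dvd
      rw [mul_comm]
      exact Nat.div_mul_cancel hdvd
    have hdd : d * d ≤ 2 ^ (D + 1) * (D + 1).choose 2 := by
      calc d * d ≤ (D+1) * D := Nat.mul_le_mul (hdD.trans (Nat.le_succ D)) hdD
        _ = 2 * ((D + 1).choose 2) := h2c.symm
        _ ≤ 2 ^ (D + 1) * (D + 1).choose 2 := by
            apply Nat.mul_le_mul_right
            calc 2 = 2^1 := rfl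
              _ ≤ 2^(D+1) := Nat.pow_le_pow_right (by norm_num) (by omega)
    calc m * (d * 4 * d) = 4 * m * (d * d) := by ring
      _ ≤ 4 * m * (2 ^ (D + 1) * (D + 1).choose 2) := Nat.mul_le_mul_left _ hdd
      _ = 4 * m * 2 ^ (D + 1) * (D + 1).choose 2 := by ring
  obtain ⟨q, hq⟩ := pad_squares hcount
    (fun z : Fin m × ((Fin d × Fin 4) × Fin d) =>
      MvPolynomial.C ((1:ℚ)/d) * cmap (ℓ z.2.1) (p z.1))
  exact ⟨q, hf2.trans hq⟩
end

section
/- Let K be a totally real number field that is Galois over ℚ, with Galois group G = Gal(K/ℚ) acting on K[x₁,…,xₙ] coefficientwise. Then for any polynomial p ∈ K[x₁,…,xₙ], the polynomial f = Σ_{σ ∈ G} (σp)², which lies in ℚ[x₁,…,xₙ], can be written as a rational sum of 2^{[K:ℚ]+1}·binomial([K:ℚ]+1, 2) squares in ℚ[x₁,…,xₙ]. -/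
open MvPolynomial

lemma aux_trace_sq_nonneg (K : Type*) [Field K] [NumberField K] [IsGalois ℚ K]
    (htotallyreal : ∀ φ : K →+* ℂ, ∀ x : K, (φ x).im = 0)
    (x : K) : 0 ≤ Algebra.trace ℚ K (x * x) := by
  have : Algebra.IsAlgebraic ℚ K := Algebra.IsAlgebraic.of_finite ℚ K
  let φ : K →ₐ[ℚ] ℂ := IsAlgClosed.lift
  have him : ∀ σ : K ≃ₐ[ℚ] K, (φ (σ x)).im = 0 := fun σ =>
    htotallyreal (φ.toRingHom.comp (σ : K →+* K)) x
  set t := Algebra.trace ℚ K (x * x) with ht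
  have h1 : ((t : ℚ) : ℂ) = ∑ σ : K ≃ₐ[ℚ] K, (φ (σ x)) * (φ (σ x)) := by
    have h2 := trace_eq_sum_automorphisms (K := ℚ) (x * x)
    have h3 : φ (algebraMap ℚ K t) = ((t : ℚ) : ℂ) := by
      rw [φ.commutes]; norm_num
    rw [← h3, h2, map_sum]
    exact Finset.sum_congr rfl fun σ _ => by rw [map_mul σ, map_mul φ]
  have h4 : ((t : ℚ) : ℝ) = ∑ σ : K ≃ₐ[ℚ] K, (φ (σ x)).re * (φ (σ x)).re := by
    have := congrArg Complex.re h1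
    simpa [Complex.mul_re, him] using this
  have h5 : (0 : ℝ) ≤ ((t : ℚ) : ℝ) := by
    rw [h4]
    exact Finset.sum_nonneg fun σ _ => mul_self_nonneg _
  exact_mod_cast h5

/-- Trace forms are rational sums of squares: if `K` is a totally real number field,
Galois over `ℚ`, with Galois group `G = Gal(K/ℚ)` acting coefficientwise on
`K[x₁,…,xₙ]`, then for any `p ∈ K[x₁,…,xₙ]` the polynomial `f = Σ_{σ ∈ G} (σp)²`
lies in `ℚ[x₁,…,xₙ]` and is a rational sum of `2^([K:ℚ]+1)·C([K:ℚ]+1, 2)` squares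
there (a linear combination of squares with positive rational coefficients). -/
theorem stmt_3 (n : ℕ) (K : Type*) [Field K] [NumberField K] [IsGalois ℚ K]
    (htotallyreal : ∀ φ : K →+* ℂ, ∀ x : K, (φ x).im = 0)
    (p : MvPolynomial (Fin n) K) :
    ∃ (f : MvPolynomial (Fin n) ℚ)
      (c : Fin (2 ^ (Module.finrank ℚ K + 1) * (Module.finrank ℚ K + 1).choose 2) → ℚ)
      (q : Fin (2 ^ (Module.finrank ℚ K + 1) * (Module.finrank ℚ K + 1).choose 2) →
        MvPolynomial (Fin n) ℚ),
      (MvPolynomial.map (algebraMap ℚ K) f =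
        ∑ σ : K ≃ₐ[ℚ] K, (MvPolynomial.map (σ : K →+* K) p) ^ 2) ∧
      (∀ i, 0 < c i) ∧
      (f = ∑ i, c i • (q i) ^ 2) := by
  classical
  set d := Module.finrank ℚ K with hd
  let b : Module.Basis (Fin d) ℚ K := Module.finBasis ℚ K
  -- decompose p over the basis
  let pj : Fin d → MvPolynomial (Fin n) ℚ := fun j =>
    ∑ m ∈ p.support, monomial m (b.repr (p.coeff m) j)
  have hpjcoeff : ∀ j m, (pj j).coeff m = b.repr (p.coeff m) j := by
    intro j m
    simp only [pj, coeff_sum, coeff_monomial]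
    rw [Finset.sum_ite_eq' p.support m (fun m' => b.repr (p.coeff m') j)]
    split
    · rfl
    · rw [notMem_support_iff.mp ‹_›]; simp
  have hp : p = ∑ j, C (b j) * (pj j).map (algebraMap ℚ K) := by
    ext m
    rw [coeff_sum]
    simp only [coeff_C_mul, coeff_map, hpjcoeff]
    rw [Finset.sum_congr rfl (fun j _ => by rw [mul_comm, ← Algebra.smul_def])]
    exact (b.sum_repr (p.coeff m)).symm
  -- diagonalize the trace form
  let Q : QuadraticForm ℚ K := (Algebra.traceForm ℚ K).toQuadraticMap
  obtain ⟨w, ⟨e⟩⟩ := Q.equivalent_weightedSumSquares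
  let E : K → Fin d → ℚ := (e : K → Fin d → ℚ)
  have hQ : ∀ z : K, (∑ i, w i • (E z i * E z i)) = Algebra.trace ℚ K (z * z) := by
    intro z
    have := e.map_app z
    rw [QuadraticMap.weightedSumSquares_apply] at this
    rw [this]
    simp [Q, LinearMap.BilinMap.toQuadraticMap_apply, Algebra.traceForm_apply]
  have htr : ∀ x y : K, Algebra.trace ℚ K (x * y) = ∑ i, w i * (E x i * E y i) := by
    intro x y
    have hxy := hQ (x + y)
    have hx := hQ x
    have hy := hQ y
    have hmap : E (x + y) = E x + E y := map_add _ _ _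
    rw [hmap] at hxy
    have expand : Algebra.trace ℚ K ((x + y) * (x + y))
        = Algebra.trace ℚ K (x * x) + Algebra.trace ℚ K (y * y)
          + 2 * Algebra.trace ℚ K (x * y) := by
      rw [add_mul, mul_add, mul_add, map_add, map_add, map_add, mul_comm y x]; ring
    rw [expand] at hxy
    have expand2 : ∀ i : Fin d, w i • ((E x + E y) i * (E x + E y) i)
        = w i • (E x i * E x i) + w i • (E y i * E y i)
          + 2 * (w i * (E x i * E y i)) := by
      intro i; simp only [Pi.add_apply, smul_eq_mul]; ring
    rw [Finset.sum_congr rfl (fun i _ => expand2 i), Finset.sum_add_distrib,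
      Finset.sum_add_distrib, hx, hy, ← Finset.mul_sum] at hxy
    linarith
  -- weights are nonnegative
  have hQt : ∀ z : K, Q z = Algebra.trace ℚ K (z * z) := by
    intro z
    simp [Q, LinearMap.BilinMap.toQuadraticMap_apply, Algebra.traceForm_apply]
  have hwnonneg : ∀ i, 0 ≤ w i := by
    intro i
    have h1 := e.symm.map_app (Pi.single i 1)
    have h2 : QuadraticMap.weightedSumSquares ℚ w (Pi.single i 1) = w i := by
      rw [QuadraticMap.weightedSumSquares_apply]
      rw [Finset.sum_eq_single i]
      · simp
      · intro k _ hk; simp [Pi.single_apply, Ne.symm hk]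
      · simp
    have h4 : w i = Algebra.trace ℚ K (e.symm (Pi.single i 1) * e.symm (Pi.single i 1)) := by
      rw [← h2, ← h1, hQt]
    rw [h4]
    exact aux_trace_sq_nonneg K htotallyreal _
  -- define f and the squares
  let f : MvPolynomial (Fin n) ℚ :=
    ∑ j, ∑ k, Algebra.trace ℚ K (b j * b k) • (pj j * pj k)
  let qq : Fin d → MvPolynomial (Fin n) ℚ := fun i => ∑ j, E (b j) i • pj j
  -- f equals the weighted sum of squares of qq
  have hfw : f = ∑ i, w i • (qq i) ^ 2 := by
    have step : ∀ i : Fin d, w i • (qq i) ^ 2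
        = ∑ j, ∑ k, (w i * (E (b j) i * E (b k) i)) • (pj j * pj k) := by
      intro i
      rw [pow_two, Finset.sum_mul_sum, Finset.smul_sum]
      refine Finset.sum_congr rfl fun j _ => ?_
      rw [Finset.smul_sum]
      refine Finset.sum_congr rfl fun k _ => ?_
      rw [smul_mul_smul_comm, smul_smul]
    rw [Finset.sum_congr rfl (fun i _ => step i), Finset.sum_comm]
    refine Finset.sum_congr rfl fun j _ => ?_
    rw [Finset.sum_comm]
    refine Finset.sum_congr rfl fun k _ => ?_
    rw [← Finset.sum_smul, ← htr]
  -- f maps to the Galois sum of squares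
  have hmapf : MvPolynomial.map (algebraMap ℚ K) f =
      ∑ σ : K ≃ₐ[ℚ] K, (MvPolynomial.map (σ : K →+* K) p) ^ 2 := by
    have hσp : ∀ σ : K ≃ₐ[ℚ] K, MvPolynomial.map (σ : K →+* K) p
        = ∑ j, C (σ (b j)) * (pj j).map (algebraMap ℚ K) := by
      intro σ
      rw [hp, map_sum]
      refine Finset.sum_congr rfl fun j _ => ?_
      rw [map_mul, map_C, MvPolynomial.map_map]
      have hcomp : (σ : K →+* K).comp (algebraMap ℚ K) = algebraMap ℚ K :=
        Subsingleton.elim _ _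
      rw [hcomp]
      rfl
    have hLHS : MvPolynomial.map (algebraMap ℚ K) f
        = ∑ j, ∑ k, C (algebraMap ℚ K (Algebra.trace ℚ K (b j * b k)))
            * ((pj j).map (algebraMap ℚ K) * (pj k).map (algebraMap ℚ K)) := by
      rw [map_sum]
      refine Finset.sum_congr rfl fun j _ => ?_
      rw [map_sum]
      refine Finset.sum_congr rfl fun k _ => ?_
      rw [smul_eq_C_mul, (MvPolynomial.map (algebraMap ℚ K)).map_mul,
        (MvPolynomial.map (algebraMap ℚ K)).map_mul, map_C]
    have hRHS : ∑ σ : K ≃ₐ[ℚ] K, (MvPolynomial.map (σ : K →+* K) p) ^ 2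
        = ∑ j, ∑ k, C (algebraMap ℚ K (Algebra.trace ℚ K (b j * b k)))
            * ((pj j).map (algebraMap ℚ K) * (pj k).map (algebraMap ℚ K)) := by
      calc ∑ σ : K ≃ₐ[ℚ] K, (MvPolynomial.map (σ : K →+* K) p) ^ 2
          = ∑ σ : K ≃ₐ[ℚ] K, ∑ j, ∑ k, C (σ (b j) * σ (b k))
              * ((pj j).map (algebraMap ℚ K) * (pj k).map (algebraMap ℚ K)) := by
            refine Finset.sum_congr rfl fun σ _ => ?_
            rw [hσp σ, pow_two, Finset.sum_mul_sum]
            refine Finset.sum_congr rfl fun j _ => Finset.sum_congr rfl fun k _ => ?_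
            rw [map_mul C]
            ring
        _ = ∑ j, ∑ k, ∑ σ : K ≃ₐ[ℚ] K, C (σ (b j) * σ (b k))
              * ((pj j).map (algebraMap ℚ K) * (pj k).map (algebraMap ℚ K)) := by
            rw [Finset.sum_comm]
            exact Finset.sum_congr rfl fun j _ => Finset.sum_comm
        _ = ∑ j, ∑ k, C (algebraMap ℚ K (Algebra.trace ℚ K (b j * b k)))
              * ((pj j).map (algebraMap ℚ K) * (pj k).map (algebraMap ℚ K)) := by
            refine Finset.sum_congr rfl fun j _ => Finset.sum_congr rfl fun k _ => ?_
            rw [← Finset.sum_mul]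
            congr 1
            rw [← map_sum C, trace_eq_sum_automorphisms]
            congr 1
            exact Finset.sum_congr rfl fun σ _ => (map_mul σ _ _).symm
    rw [hLHS, hRHS]
  -- padding
  set N := 2 ^ (d + 1) * (d + 1).choose 2 with hN
  have hdpos : 0 < d := Module.finrank_pos
  have hdN : d ≤ N := by
    have h1 : d ≤ 2 ^ (d + 1) :=
      le_of_lt ((Nat.lt_two_pow_self (n := d)).trans_le (Nat.pow_le_pow_right (by norm_num) (Nat.le_succ d)))
    have h2 : 1 ≤ (d + 1).choose 2 := Nat.choose_pos (by omega)
    calc d ≤ 2 ^ (d + 1) := h1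
      _ = 2 ^ (d + 1) * 1 := (mul_one _).symm
      _ ≤ N := Nat.mul_le_mul_left _ h2
  let c : Fin N → ℚ := fun i =>
    if h : (i : ℕ) < d then (if 0 < w ⟨i, h⟩ then w ⟨i, h⟩ else 1) else 1
  let q : Fin N → MvPolynomial (Fin n) ℚ := fun i =>
    if h : (i : ℕ) < d then (if 0 < w ⟨i, h⟩ then qq ⟨i, h⟩ else 0) else 0
  refine ⟨f, c, q, hmapf, ?_, ?_⟩
  · intro i
    simp only [c]
    split
    · split
      · assumption
      · norm_num
    · norm_num
  · -- f = ∑ c i • q i ^ 2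
    let g : ℕ → MvPolynomial (Fin n) ℚ := fun i =>
      if h : i < d then w ⟨i, h⟩ • (qq ⟨i, h⟩) ^ 2 else 0
    have hterm : ∀ i : Fin N, c i • q i ^ 2 = g (i : ℕ) := by
      intro i
      simp only [c, q, g]
      split
      · rename_i h
        by_cases hw : 0 < w ⟨i, h⟩
        · rw [if_pos hw, if_pos hw]
        · rw [if_neg hw, if_neg hw]
          have : w ⟨i, h⟩ = 0 := le_antisymm (not_lt.mp hw) (hwnonneg _)
          rw [this]
          simp
      · simp
    rw [hfw]
    rw [Finset.sum_congr rfl (fun i _ => hterm i)]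
    rw [Fin.sum_univ_eq_sum_range (fun i => g i) N]
    rw [← Finset.sum_subset (Finset.range_subset_range.mpr hdN)
      (fun x _ hx => by simp only [g]; rw [dif_neg (by simpa using hx)])]
    rw [← Fin.sum_univ_eq_sum_range (fun i => g i) d]
    refine Finset.sum_congr rfl fun i _ => ?_
    simp only [g]
    rw [dif_pos i.isLt]
end

section
/- Let F be a field of characteristic zero that contains a square root of 2, and let A be an r × r symmetric matrix over F. Then there exists an r × binomial(r+1, 2) matrix C with entries in F such that [tr(A^{i+j−2})]_{i,j=1}^r = C·Cᵀ. -/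
open Matrix

private lemma sum_pairs_aux {n : ℕ} {F : Type*} [Field F] (g : Fin n × Fin n → F)
    (hg : ∀ a b : Fin n, g (a, b) = g (b, a)) :
    ∑ p : Fin n × Fin n, g p
      = ∑ p : {p : Fin n × Fin n // p.1 ≤ p.2},
          (if (p : Fin n × Fin n).1 = (p : Fin n × Fin n).2 then g p else 2 * g p) := by
  classical
  have hsub : (∑ p : {p : Fin n × Fin n // p.1 ≤ p.2},
      (if (p : Fin n × Fin n).1 = (p : Fin n × Fin n).2 then g p else 2 * g p))
      = ∑ p ∈ Finset.univ.filter (fun p : Fin n × Fin n => p.1 ≤ p.2),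
          (if p.1 = p.2 then g p else 2 * g p) :=
    (Finset.sum_subtype _ (fun x => by simp) (fun p => if p.1 = p.2 then g p else 2 * g p)).symm
  rw [hsub]
  have hsplit : ∀ f : Fin n × Fin n → F,
      ∑ p ∈ Finset.univ.filter (fun p : Fin n × Fin n => p.1 ≤ p.2), f p
        = ∑ p ∈ Finset.univ.filter (fun p : Fin n × Fin n => p.1 = p.2), f p
          + ∑ p ∈ Finset.univ.filter (fun p : Fin n × Fin n => p.1 < p.2), f p := by
    intro f
    rw [← Finset.sum_filter_add_sum_filter_not
        (Finset.univ.filter (fun p : Fin n × Fin n => p.1 ≤ p.2))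
        (fun p => p.1 = p.2), Finset.filter_filter, Finset.filter_filter]
    congr 1
    · apply Finset.sum_congr _ (fun _ _ => rfl)
      apply Finset.filter_congr
      intro p _
      constructor
      · exact fun h => h.2
      · exact fun h => ⟨le_of_eq h, h⟩
    · apply Finset.sum_congr _ (fun _ _ => rfl)
      apply Finset.filter_congr
      intro p _
      simp [lt_iff_le_and_ne]
  have hlhs : ∑ p : Fin n × Fin n, g p
      = ∑ p ∈ Finset.univ.filter (fun p : Fin n × Fin n => p.1 = p.2), g p
        + 2 * ∑ p ∈ Finset.univ.filter (fun p : Fin n × Fin n => p.1 < p.2), g p := by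
    rw [← Finset.sum_filter_add_sum_filter_not Finset.univ
        (fun p : Fin n × Fin n => p.1 ≤ p.2) g, hsplit g]
    have hswap : ∑ p ∈ Finset.univ.filter (fun p : Fin n × Fin n => ¬ p.1 ≤ p.2), g p
        = ∑ p ∈ Finset.univ.filter (fun p : Fin n × Fin n => p.1 < p.2), g p := by
      apply Finset.sum_nbij' (fun p => (p.2, p.1)) (fun p => (p.2, p.1))
      · intro p hp
        simp only [Finset.mem_filter, Finset.mem_univ, true_and, not_le] at hp ⊢
        exact hp
      · intro p hp
        simp only [Finset.mem_filter, Finset.mem_univ, true_and, not_le] at hp ⊢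
        exact hp
      · intro p _; rfl
      · intro p _; rfl
      · intro p _
        exact hg p.1 p.2
    rw [hswap]; ring
  rw [hlhs, hsplit (fun p => if p.1 = p.2 then g p else 2 * g p)]
  congr 1
  · apply Finset.sum_congr rfl
    intro p hp
    simp only [Finset.mem_filter] at hp
    rw [if_pos hp.2]
  · rw [Finset.mul_sum]
    apply Finset.sum_congr rfl
    intro p hp
    simp only [Finset.mem_filter] at hp
    rw [if_neg (ne_of_lt hp.2)]

/-- Factorization of the moment matrix: if `F` is a field of characteristic zero
containing a square root of `2`, and `A` is an `r × r` symmetric matrix over `F`,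
then there is an `r × C(r+1,2)` matrix `C` over `F` with
`[tr(A^(i+j-2))]_{i,j} = C·Cᵀ`. -/
theorem stmt_6 (r : ℕ) (F : Type*) [Field F] [CharZero F]
    (s : F) (hs : s ^ 2 = 2)
    (A : Matrix (Fin r) (Fin r) F) (hA : A.IsSymm) :
    ∃ C : Matrix (Fin r) (Fin ((r + 1).choose 2)) F,
      (Matrix.of fun i j : Fin r => (A ^ ((i : ℕ) + (j : ℕ))).trace) = C * Cᵀ := by
  classical
  have hcard : Fintype.card {p : Fin r × Fin r // p.1 ≤ p.2} = (r + 1).choose 2 := by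
    rw [← Fintype.card_congr (Sym2.sortEquiv (α := Fin r)), Sym2.card, Fintype.card_fin]
  let e : Fin ((r + 1).choose 2) ≃ {p : Fin r × Fin r // p.1 ≤ p.2} :=
    (Fintype.equivFinOfCardEq hcard).symm
  set C0 : Matrix (Fin r) (Fin ((r + 1).choose 2)) F := Matrix.of (fun a m =>
    if ((e m : Fin r × Fin r)).1 = ((e m : Fin r × Fin r)).2
    then (A ^ (a : ℕ)) (e m : Fin r × Fin r).1 (e m : Fin r × Fin r).1
    else s * (A ^ (a : ℕ)) (e m : Fin r × Fin r).1 (e m : Fin r × Fin r).2) with hC0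
  refine ⟨C0, ?_⟩
  ext i j
  have hpowsymm : ∀ m : ℕ, (A ^ m).IsSymm := fun m => hA.pow m
  have hgsym : ∀ a b : Fin r,
      (fun p : Fin r × Fin r => (A ^ (i : ℕ)) p.1 p.2 * (A ^ (j : ℕ)) p.1 p.2) (a, b)
        = (fun p : Fin r × Fin r => (A ^ (i : ℕ)) p.1 p.2 * (A ^ (j : ℕ)) p.1 p.2) (b, a) := by
    intro a b
    simp only
    rw [← (hpowsymm (i : ℕ)).apply a b, ← (hpowsymm (j : ℕ)).apply a b]
  have htr : (A ^ ((i : ℕ) + (j : ℕ))).trace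
      = ∑ p : Fin r × Fin r, (A ^ (i : ℕ)) p.1 p.2 * (A ^ (j : ℕ)) p.1 p.2 := by
    rw [pow_add, Matrix.trace]
    rw [Fintype.sum_prod_type]
    apply Finset.sum_congr rfl
    intro k _
    rw [Matrix.diag_apply, Matrix.mul_apply]
    apply Finset.sum_congr rfl
    intro l _
    rw [← (hpowsymm (j : ℕ)).apply l k]
  show (A ^ ((i : ℕ) + (j : ℕ))).trace = (C0 * C0ᵀ) i j
  rw [htr, sum_pairs_aux _ hgsym, Matrix.mul_apply, ← Equiv.sum_comp e.symm
    (fun m => C0 i m * C0ᵀ m j)]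
  apply Finset.sum_congr rfl
  intro p _
  simp only [hC0, Matrix.of_apply, Matrix.transpose_apply, Equiv.apply_symm_apply]
  by_cases h : (p : Fin r × Fin r).1 = (p : Fin r × Fin r).2
  · rw [if_pos h, if_pos h, if_pos h, ← h]
  · rw [if_neg h, if_neg h, if_neg h, ← hs]
    ring
end

section
/- There is no 2 × 2 symmetric matrix with rational entries whose characteristic polynomial is x² − 3. -/
open Polynomial

lemma aux_descent : ∀ d : ℕ, ∀ x y : ℤ, x ^ 2 + y ^ 2 = 3 * (d : ℤ) ^ 2 → d = 0 := by
  intro d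
  induction d using Nat.strong_induction_on with
  | _ d ih =>
    intro x y h
    rcases Nat.eq_zero_or_pos d with hd | hd
    · exact hd
    · exfalso
      have h4 : (x : ZMod 4) ^ 2 + (y : ZMod 4) ^ 2 = 3 * ((d : ℤ) : ZMod 4) ^ 2 := by
        exact_mod_cast congrArg (Int.cast : ℤ → ZMod 4) h
      have key : ∀ a b c : ZMod 4, a ^ 2 + b ^ 2 = 3 * c ^ 2 →
          (ZMod.castHom (show 2 ∣ 4 by norm_num) (ZMod 2)) a = 0 ∧
          (ZMod.castHom (show 2 ∣ 4 by norm_num) (ZMod 2)) b = 0 ∧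
          (ZMod.castHom (show 2 ∣ 4 by norm_num) (ZMod 2)) c = 0 := by decide
      obtain ⟨hx2, hy2, hd2⟩ := key _ _ _ h4
      have cast_eq : ∀ z : ℤ, (ZMod.castHom (show 2 ∣ 4 by norm_num) (ZMod 2)) (z : ZMod 4) = (z : ZMod 2) := fun z => map_intCast _ z
      have hxd : (2 : ℤ) ∣ x := by
        have h2 : ((x : ZMod 2)) = 0 := by rw [← cast_eq]; exact hx2
        exact_mod_cast (ZMod.intCast_zmod_eq_zero_iff_dvd x 2).mp h2
      have hyd : (2 : ℤ) ∣ y := by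
        have h2 : ((y : ZMod 2)) = 0 := by rw [← cast_eq]; exact hy2
        exact_mod_cast (ZMod.intCast_zmod_eq_zero_iff_dvd y 2).mp h2
      have hdd' : 2 ∣ d := by
        have h2 : (((d : ℤ) : ZMod 2)) = 0 := by rw [← cast_eq]; exact hd2
        exact_mod_cast (ZMod.intCast_zmod_eq_zero_iff_dvd (d : ℤ) 2).mp h2
      obtain ⟨x', rfl⟩ := hxd
      obtain ⟨y', rfl⟩ := hyd
      obtain ⟨d', rfl⟩ := hdd'
      have h' : x' ^ 2 + y' ^ 2 = 3 * (d' : ℤ) ^ 2 := by push_cast at h ⊢; nlinarith [h]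
      have : d' = 0 := ih d' (by omega) x' y' h'
      omega

lemma no_rat_sq : ∀ a b : ℚ, a ^ 2 + b ^ 2 ≠ 3 := by
  intro a b hab
  have hx : (a.num * b.den) ^ 2 + (b.num * a.den) ^ 2 = 3 * ((a.den * b.den : ℕ) : ℤ) ^ 2 := by
    have ha := Rat.num_div_den a
    have hb := Rat.num_div_den b
    rw [div_eq_iff (by exact_mod_cast a.den_pos.ne')] at ha
    rw [div_eq_iff (by exact_mod_cast b.den_pos.ne')] at hb
    have : ((a.num * b.den) ^ 2 + (b.num * a.den) ^ 2 : ℚ)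
        = 3 * ((a.den * b.den : ℕ) : ℤ) ^ 2 := by
      push_cast
      rw [ha, hb]
      linear_combination ((a.den : ℚ) * b.den) ^ 2 * hab
    exact_mod_cast this
  have := aux_descent (a.den * b.den) _ _ hx
  exact Nat.mul_ne_zero a.den_pos.ne' b.den_pos.ne' this

/-- There is no `2 × 2` symmetric matrix with rational entries whose characteristic
polynomial is `x² − 3`. -/
theorem stmt_7 :
    ¬ ∃ A : Matrix (Fin 2) (Fin 2) ℚ, A.IsSymm ∧
      A.charpoly = Polynomial.X ^ 2 - Polynomial.C 3 := by
  rintro ⟨A, hsymm, hcp⟩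
  have htr : A.trace = 0 := by
    have := Matrix.trace_eq_neg_charpoly_coeff A
    rw [hcp] at this
    simpa using this
  have hdet : A.det = -3 := by
    have := Matrix.det_eq_sign_charpoly_coeff A
    rw [hcp] at this
    simp [Polynomial.coeff_sub] at this
    simpa using this
  rw [Matrix.trace_fin_two] at htr
  rw [Matrix.det_fin_two] at hdet
  have hba := hsymm.apply 0 1
  have h11 : A 1 1 = - A 0 0 := by linarith
  rw [h11, hba] at hdet
  exact no_rat_sq (A 0 0) (A 0 1) (by nlinarith [hdet])
end

section
/- Let u(x) ∈ ℂ[x] be monic of degree r, let b₁,…,b_r be distinct complex numbers with u(b_k) ≠ 0 for each k, and set v(x) = Π_{k=1}^r (x − b_k). Let d₁,…,d_r and δ be complex numbers satisfying δ·v'(b_k)·d_k² − u(b_k) = 0 for k = 1,…,r. Let d = [d₁,…,d_r]ᵀ and B = diag(b₁,…,b_r). Then the symmetric matrix A = B − δ·d·dᵀ has characteristic polynomial equal to u(x). -/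
open Polynomial

lemma det_diag_add_outer {K : Type*} [Field K] {n : Type*} [Fintype n] [DecidableEq n]
    (w uu vv : n → K) (hw : ∀ i, w i ≠ 0) :
    (Matrix.diagonal w + Matrix.replicateCol Unit uu * Matrix.replicateRow Unit vv).det
      = ∏ i, w i + ∑ i, uu i * vv i * ∏ j ∈ Finset.univ.erase i, w j := by
  have hdet : IsUnit (Matrix.diagonal w).det := by
    rw [Matrix.det_diagonal]
    exact (Finset.prod_ne_zero_iff.mpr fun i _ => hw i).isUnit
  have hinv : (Matrix.diagonal w)⁻¹ = Matrix.diagonal (fun i => (w i)⁻¹) := by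
    apply Matrix.inv_eq_right_inv
    rw [Matrix.diagonal_mul_diagonal]
    convert Matrix.diagonal_one
    simp [mul_inv_cancel₀ (hw _)]
  rw [Matrix.det_add_replicateCol_mul_replicateRow hdet, Matrix.det_diagonal, hinv]
  rw [Matrix.det_unique]
  have : (Matrix.replicateRow Unit vv * Matrix.diagonal (fun i => (w i)⁻¹) * Matrix.replicateCol Unit uu)
      default default = ∑ i, vv i * (w i)⁻¹ * uu i := by
    simp [Matrix.mul_apply, Matrix.replicateRow_apply, Matrix.replicateCol_apply, Matrix.diagonal_apply,
      Ring.inverse_eq_inv', Finset.sum_ite_eq, mul_comm]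
  rw [Matrix.add_apply, Matrix.one_apply_eq, this, mul_add, mul_one, Finset.mul_sum]
  congr 1
  refine Finset.sum_congr rfl fun i _ => ?_
  rw [← Finset.mul_prod_erase Finset.univ w (Finset.mem_univ i)]
  field_simp [hw i]

/-- Fiedler's theorem: let `u(x) ∈ ℂ[x]` be monic of degree `r`, let `b₁,…,b_r` be
distinct complex numbers with `u(b_k) ≠ 0`, set `v(x) = Π_k (x − b_k)`, and choose
`d₁,…,d_r` and `δ` with `δ·v'(b_k)·d_k² − u(b_k) = 0` for all `k`. Then the symmetric
matrix `A = diag(b₁,…,b_r) − δ·d·dᵀ` has characteristic polynomial `u(x)`. -/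
theorem stmt_8 (r : ℕ) (u : Polynomial ℂ) (hu : u.Monic) (hdeg : u.natDegree = r)
    (b : Fin r → ℂ) (hb : Function.Injective b)
    (hub : ∀ k, u.eval (b k) ≠ 0)
    (d : Fin r → ℂ) (δ : ℂ)
    (hd : ∀ k, δ * (Polynomial.derivative (∏ i, (X - C (b i)))).eval (b k) * (d k) ^ 2
      - u.eval (b k) = 0) :
    (Matrix.diagonal b - δ • Matrix.of fun i j => d i * d j).charpoly = u := by
  rcases Nat.eq_zero_or_pos r with hr | hr
  · subst hr
    have h1 : u = 1 := hu.natDegree_eq_zero.mp hdeg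
    rw [h1, Matrix.charpoly, Matrix.det_isEmpty]
  set A : Matrix (Fin r) (Fin r) ℂ :=
    Matrix.diagonal b - δ • Matrix.of fun i j => d i * d j with hA
  set v : ℂ[X] := ∏ i, (X - C (b i)) with hv
  set S : ℂ[X] := ∑ i, C (d i) ^ 2 * ∏ j ∈ Finset.univ.erase i, (X - C (b j)) with hS
  set P : ℂ[X] := v + C δ * S with hP
  -- Step A: charpoly A = P
  have stepA : A.charpoly = P := by
    set alg : ℂ[X] →+* RatFunc ℂ := (algebraMap ℂ[X] (RatFunc ℂ) : ℂ[X] →+* RatFunc ℂ)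
      with halg
    have hinj : Function.Injective alg := RatFunc.algebraMap_injective ℂ
    apply hinj
    have hmap : (Matrix.charmatrix A).map alg
        = Matrix.diagonal (fun i => alg (X - C (b i)))
          + Matrix.replicateCol Unit (fun i => alg (C δ * C (d i))) * Matrix.replicateRow Unit
            (fun j => alg (C (d j))) := by
      ext i j
      by_cases hij : i = j
      · subst hij
        simp [Matrix.charmatrix_apply, Matrix.diagonal_apply, Matrix.mul_apply, hA,
          Matrix.sub_apply, Matrix.smul_apply, map_sub, map_add, map_mul]
        ring
      · simp [Matrix.charmatrix_apply, Matrix.diagonal_apply, hij, Matrix.mul_apply, hA,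
          Matrix.sub_apply, Matrix.smul_apply, map_sub, map_add, map_mul]
        ring
    have hW : ∀ i : Fin r, alg (X - C (b i)) ≠ 0 := by
      intro i
      exact (map_ne_zero_iff alg hinj).mpr (X_sub_C_ne_zero (b i))
    have := det_diag_add_outer (fun i => alg (X - C (b i)))
      (fun i => alg (C δ * C (d i))) (fun j => alg (C (d j))) hW
    rw [Matrix.charpoly, RingHom.map_det, RingHom.mapMatrix_apply, hmap, this,
      hP, hv, hS, map_add, map_mul, map_prod, map_sum]
    congr 1
    rw [Finset.mul_sum]
    refine Finset.sum_congr rfl fun i _ => ?_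
    simp only [map_mul, map_pow, map_prod]
    ring
  -- Step B: P = u
  have hvmonic : v.Monic := monic_prod_of_monic _ _ fun i _ => monic_X_sub_C _
  have hvdeg : v.natDegree = r := by
    rw [hv, natDegree_prod_of_monic _ _ fun i _ => monic_X_sub_C _]
    simp
  have hv' : ∀ k, (derivative v).eval (b k) = ∏ j ∈ Finset.univ.erase k, (b k - b j) := by
    intro k
    have hsplit : v = (X - C (b k)) * ∏ j ∈ Finset.univ.erase k, (X - C (b j)) :=
      (Finset.mul_prod_erase _ _ (Finset.mem_univ k)).symm
    rw [hsplit, derivative_mul, derivative_sub, derivative_X, derivative_C, sub_zero]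
    simp [eval_prod]
  have hPeval : ∀ k, P.eval (b k) = u.eval (b k) := by
    intro k
    have hveval : v.eval (b k) = 0 := by
      rw [hv, eval_prod]
      exact Finset.prod_eq_zero (Finset.mem_univ k) (by simp)
    have hSeval : S.eval (b k) = d k ^ 2 * ∏ j ∈ Finset.univ.erase k, (b k - b j) := by
      rw [hS, eval_finset_sum]
      rw [Finset.sum_eq_single k]
      · simp [eval_prod]
      · intro i _ hik
        have hki : k ∈ Finset.univ.erase i := Finset.mem_erase.mpr ⟨fun h => hik h.symm,
          Finset.mem_univ k⟩
        simp only [eval_mul, eval_pow, eval_C, eval_prod]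
        rw [Finset.prod_eq_zero hki (by simp)]
        ring
      · intro h; exact absurd (Finset.mem_univ k) h
    rw [hP, eval_add, eval_mul, eval_C, hveval, hSeval, zero_add, ← hv' k]
    linear_combination hd k
  have hq : (P - u).natDegree < r := by
    have hsplit : P - u = (v - u) + C δ * S := by rw [hP]; ring
    rw [hsplit]
    have h1 : (v - u).natDegree < r := by
      by_cases hvu : v - u = 0
      · simpa [hvu] using hr
      · rw [natDegree_lt_iff_degree_lt hvu]
        have : degree (v - u) < degree v := by
          apply degree_sub_lt
          · rw [degree_eq_natDegree hvmonic.ne_zero, degree_eq_natDegree hu.ne_zero, hvdeg, hdeg]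
          · exact hvmonic.ne_zero
          · rw [hvmonic.leadingCoeff, hu.leadingCoeff]
        rwa [degree_eq_natDegree hvmonic.ne_zero, hvdeg] at this
    have h2 : (C δ * S).natDegree < r := by
      have hSle : S.natDegree ≤ r - 1 := by
        rw [hS]
        apply natDegree_sum_le_of_forall_le
        intro i _
        refine (natDegree_mul_le).trans ?_
        rw [natDegree_prod_of_monic _ _ fun j _ => monic_X_sub_C _]
        simp [natDegree_pow, Finset.card_erase_of_mem]
      exact lt_of_le_of_lt ((natDegree_C_mul_le δ S).trans hSle) (Nat.sub_lt hr one_pos)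
    calc (v - u + C δ * S).natDegree ≤ max (v - u).natDegree (C δ * S).natDegree :=
          natDegree_add_le _ _
      _ < r := max_lt h1 h2
  have hPu : P - u = 0 := by
    apply Polynomial.eq_zero_of_natDegree_lt_card_of_eval_eq_zero (P - u) hb
    · intro k; rw [eval_sub, hPeval k, sub_self]
    · simpa using hq
  rw [stepA, ← sub_eq_zero]
  exact hPu
end

section
/- If u(x) ∈ ℚ[x] is monic of degree r and has r distinct real roots, then there exist positive rational numbers l₁,…,l_r and an r × r symmetric matrix A with entries in the subfield ℚ(√l₁,…,√l_r) of ℝ such that the characteristic polynomial of A equals u(x); in particular, the eigenvalues of A are exactly the roots of u(x). -/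
open Polynomial
open Matrix


/-- Conjugation invariance of the characteristic polynomial. -/
lemma my_charpoly_conj {n : ℕ} {K : Type*} [Field K] (P M : Matrix (Fin n) (Fin n) K)
    (h : IsUnit P.det) : (P * M * P⁻¹).charpoly = M.charpoly := by
  have hPQ : (P.map C) * (P⁻¹.map C) = 1 := by
    rw [← Matrix.map_mul, Matrix.mul_nonsing_inv _ h]
    exact Matrix.map_one _ (map_zero C) (map_one C)
  have hcm : Matrix.charmatrix (P * M * P⁻¹) = (P.map C) * M.charmatrix * (P⁻¹.map C) := by
    unfold Matrix.charmatrix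
    simp only [RingHom.mapMatrix_apply]
    rw [Matrix.mul_sub, Matrix.sub_mul]
    congr 1
    · rw [← (Matrix.scalar_commute (X : K[X]) (fun r => Commute.all _ _) (P.map C)).eq,
        Matrix.mul_assoc, hPQ, Matrix.mul_one]
    · rw [Matrix.map_mul, Matrix.map_mul]
  rw [Matrix.charpoly, Matrix.charpoly, hcm, Matrix.det_mul, Matrix.det_mul,
    mul_right_comm, ← Matrix.det_mul, hPQ, Matrix.det_one, one_mul]

lemma my_charpoly_diagonal {n : ℕ} {K : Type*} [CommRing K] (v : Fin n → K) :
    (Matrix.diagonal v).charpoly = ∏ k, (X - C (v k)) := by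
  have h : Matrix.charmatrix (Matrix.diagonal v)
      = Matrix.diagonal (fun k => (X : K[X]) - C (v k)) := by
    ext i j
    by_cases hij : i = j
    · subst hij; simp
    · rw [Matrix.charmatrix_apply_ne _ _ _ hij, Matrix.diagonal_apply_ne _ hij,
        Matrix.diagonal_apply_ne _ hij, map_zero, neg_zero]
  rw [Matrix.charpoly, h, Matrix.det_diagonal]


lemma my_ldl {r : ℕ} (M : Matrix (Fin r) (Fin r) ℚ) (hsym : M.IsSymm)
    (hpos : ∀ x : Fin r → ℚ, x ≠ 0 → 0 < dotProduct x (M *ᵥ x)) :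
    ∃ (L : Matrix (Fin r) (Fin r) ℚ) (d : Fin r → ℚ),
      IsUnit L.det ∧ (∀ k, 0 < d k) ∧ M = L * Matrix.diagonal d * Lᵀ := by
  haveI : Invertible (2 : ℚ) := invertibleOfNonzero two_ne_zero
  have hMe : ∀ i j, M j i = M i j := fun i j => by
    have := congrFun (congrFun hsym i) j
    rwa [Matrix.transpose_apply] at this
  have hBsymm : (Matrix.toLinearMap₂' ℚ M).IsSymm := by
    refine LinearMap.isSymm_def.mpr ?_
    intro x y
    simp only [RingHom.id_apply, Matrix.toLinearMap₂'_apply']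
    simp only [dotProduct, Matrix.mulVec, Finset.mul_sum]
    rw [Finset.sum_comm]
    refine Finset.sum_congr rfl fun i _ => Finset.sum_congr rfl fun j _ => ?_
    rw [hMe j i]; ring
  obtain ⟨v0, hv0⟩ := LinearMap.BilinForm.exists_orthogonal_basis hBsymm
  let e : Fin (Module.finrank ℚ (Fin r → ℚ)) ≃ Fin r := finCongr (by simp)
  let v : Module.Basis (Fin r) ℚ (Fin r → ℚ) := v0.reindex e
  have hvo : ∀ i j, i ≠ j → dotProduct (v i) (M *ᵥ v j) = 0 := by
    intro i j hij
    have h2 : Matrix.toLinearMap₂' ℚ M (v0 (e.symm i)) (v0 (e.symm j)) = 0 :=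
      hv0 (fun h => hij (by simpa using congrArg e h))
    rw [Matrix.toLinearMap₂'_apply'] at h2
    simpa [v, Module.Basis.reindex_apply] using h2
  let P := (Pi.basisFun ℚ (Fin r)).toMatrix v
  haveI : Invertible P := (Pi.basisFun ℚ (Fin r)).invertibleToMatrix v
  haveI : Invertible Pᵀ := Matrix.invertibleTranspose P
  have hPapp : ∀ i j, P i j = v j i := fun i j => by
    simp [P, Module.Basis.toMatrix_apply]
  have hentry : ∀ i j, (Pᵀ * M * P) i j = dotProduct (v i) (M *ᵥ v j) := by
    intro i j
    simp only [Matrix.mul_apply, Matrix.transpose_apply, hPapp,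
      dotProduct, Matrix.mulVec, Finset.sum_mul, Finset.mul_sum, mul_assoc]
    exact Finset.sum_comm
  set d : Fin r → ℚ := fun k => dotProduct (v k) (M *ᵥ v k) with hd
  have hdiag : Pᵀ * M * P = Matrix.diagonal d := by
    ext i j
    rw [hentry]
    by_cases hij : i = j
    · subst hij; simp [hd]
    · rw [Matrix.diagonal_apply_ne _ hij]; exact hvo i j hij
  refine ⟨(P⁻¹)ᵀ, d, ?_, ?_, ?_⟩
  · rw [Matrix.det_transpose]
    exact (Matrix.isUnit_nonsing_inv_det_iff).mpr (Matrix.isUnit_det_of_invertible P)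
  · intro k
    exact hpos (v k) (v.ne_zero k)
  · have h1 : Pᵀ⁻¹ * (Pᵀ * M * P) * P⁻¹ = M := by
      have h2 : Pᵀ⁻¹ * (Pᵀ * M * P) * P⁻¹ = (Pᵀ⁻¹ * Pᵀ) * M * (P * P⁻¹) := by
        simp only [Matrix.mul_assoc]
      rw [h2, Matrix.inv_mul_of_invertible, Matrix.mul_inv_of_invertible,
        Matrix.one_mul, Matrix.mul_one]
    rw [Matrix.transpose_transpose, Matrix.transpose_nonsing_inv, ← hdiag]
    exact h1.symm

/-- If `u(x) ∈ ℚ[x]` is monic of degree `r` with `r` distinct real roots, then there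
are positive rationals `l₁,…,l_r` and an `r × r` symmetric real matrix `A`, all of
whose entries lie in the subfield `ℚ(√l₁,…,√l_r)` of `ℝ`, whose characteristic
polynomial equals `u(x)` (so the eigenvalues of `A` are exactly the roots of `u`). -/
theorem stmt_10 (r : ℕ) (u : Polynomial ℚ) (hu : u.Monic) (hdeg : u.natDegree = r)
    (y : Fin r → ℝ) (hy : Function.Injective y)
    (hroots : u.map (algebraMap ℚ ℝ) = ∏ k, (X - C (y k))) :
    ∃ (l : Fin r → ℚ) (A : Matrix (Fin r) (Fin r) ℝ),
      (∀ k, 0 < l k) ∧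
      (∀ i j, A i j ∈
        IntermediateField.adjoin ℚ (Set.range fun k => Real.sqrt (l k))) ∧
      A.IsSymm ∧
      A.charpoly = u.map (algebraMap ℚ ℝ) := by
  set q : ℚ →+* ℝ := (algebraMap ℚ ℝ) with hqdef
  have hqc : ∀ a : ℚ, q a = (a : ℝ) := fun a => eq_ratCast q a
  -- the Vandermonde matrix
  set W : Matrix (Fin r) (Fin r) ℝ := Matrix.of fun j k : Fin r => y k ^ (j : ℕ) with hWdef
  have hW : IsUnit W.det := by
    have h1 : W = (Matrix.vandermonde y)ᵀ := by
      ext i j; simp [hWdef, Matrix.vandermonde]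
    rw [h1, Matrix.det_transpose]
    exact isUnit_iff_ne_zero.mpr (Matrix.det_vandermonde_ne_zero_iff.mpr hy)
  -- the companion matrix
  set Cq : Matrix (Fin r) (Fin r) ℚ := Matrix.of fun i j : Fin r =>
    if (i : ℕ) = r - 1 then -(u.coeff (j : ℕ)) else if (j : ℕ) = (i : ℕ) + 1 then 1 else 0
    with hCqdef
  -- roots identity
  have hroot_k : ∀ k, ∑ j : Fin r, q (u.coeff (j : ℕ)) * y k ^ (j : ℕ) = -(y k ^ r) := by
    intro k
    have h0 : (u.map q).eval (y k) = 0 := by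
      rw [hroots]
      rw [Polynomial.eval_prod]
      exact Finset.prod_eq_zero (Finset.mem_univ k) (by simp)
    have hdeg' : (u.map q).natDegree = r := by rw [hu.natDegree_map, hdeg]
    rw [Polynomial.eval_eq_sum_range, hdeg', Finset.sum_range_succ] at h0
    have hc : (u.map q).coeff r = 1 := by
      have := (hu.map q).coeff_natDegree
      rwa [hdeg'] at this
    rw [hc, one_mul] at h0
    have hsum : ∑ j : Fin r, q (u.coeff (j : ℕ)) * y k ^ (j : ℕ)
        = ∑ n ∈ Finset.range r, (u.map q).coeff n * y k ^ n := by
      rw [← Fin.sum_univ_eq_sum_range (fun n => (u.map q).coeff n * y k ^ n) r]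
      exact Finset.sum_congr rfl fun j _ => by rw [Polynomial.coeff_map]
    rw [hsum]
    linarith
  -- companion matrix diagonalization
  have hCW : Cq.map q * W = W * Matrix.diagonal y := by
    ext i k
    rw [Matrix.mul_apply, Matrix.mul_diagonal]
    have hr : 0 < r := i.pos
    by_cases hi : (i : ℕ) = r - 1
    · have : ∀ j : Fin r, (Cq.map q) i j * W j k = -(q (u.coeff (j : ℕ)) * y k ^ (j : ℕ)) := by
        intro j
        simp [hCqdef, hWdef, hi, Matrix.map_apply]
      rw [Finset.sum_congr rfl fun j _ => this j, Finset.sum_neg_distrib, hroot_k, neg_neg,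
        hWdef]
      show y k ^ r = y k ^ (i : ℕ) * y k
      rw [hi, ← pow_succ]
      congr 1
      omega
    · have hi1 : (i : ℕ) + 1 < r := by
        have := i.isLt; omega
      rw [Finset.sum_eq_single (⟨(i : ℕ) + 1, hi1⟩ : Fin r)]
      · show (Cq.map q) i ⟨(i : ℕ) + 1, hi1⟩ * y k ^ ((i:ℕ)+1) = W i k * y k
        simp [hCqdef, hWdef, hi, Matrix.map_apply, pow_succ]
      · intro j _ hj
        have : ¬ ((j : ℕ) = (i : ℕ) + 1) := fun h => hj (Fin.ext h)
        simp [hCqdef, hi, this, Matrix.map_apply]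
      · intro h; exact absurd (Finset.mem_univ _) h
  have hCr : Cq.map q = W * Matrix.diagonal y * W⁻¹ := by
    rw [← hCW, Matrix.mul_nonsing_inv_cancel_right _ _ hW]
  have hpow : ∀ n : ℕ, (Cq.map q) ^ n = W * (Matrix.diagonal y) ^ n * W⁻¹ := by
    intro n
    induction n with
    | zero => rw [pow_zero, pow_zero, Matrix.mul_one, Matrix.mul_nonsing_inv _ hW]
    | succ n ih =>
        rw [pow_succ, ih, pow_succ, hCr]
        simp only [Matrix.mul_assoc, Matrix.nonsing_inv_mul_cancel_left _ _ hW]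
  -- the Hankel matrix of power sums
  set Hq : Matrix (Fin r) (Fin r) ℚ := Matrix.of fun i j : Fin r =>
    (Cq ^ ((i : ℕ) + (j : ℕ))).trace with hHqdef
  have htr : ∀ n : ℕ, q ((Cq ^ n).trace) = ∑ k, y k ^ n := by
    intro n
    have h1 : (Cq ^ n).map q = (Cq.map q) ^ n := by
      have := map_pow (q.mapMatrix) Cq n
      simpa [RingHom.mapMatrix_apply] using this
    have h2 : q ((Cq ^ n).trace) = ((Cq ^ n).map q).trace := by
      simp [Matrix.trace, Matrix.diag, map_sum, Matrix.map_apply]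
    rw [h2, h1, hpow, Matrix.trace_mul_cycle, Matrix.nonsing_inv_mul _ hW, Matrix.one_mul,
      Matrix.diagonal_pow, Matrix.trace_diagonal]
    simp
  have hHW : Hq.map q = W * Wᵀ := by
    ext i j
    rw [Matrix.map_apply, Matrix.mul_apply]
    show q ((Cq ^ ((i : ℕ) + (j : ℕ))).trace) = _
    rw [htr]
    exact Finset.sum_congr rfl fun k _ => by
      simp [hWdef, pow_add]
  have hHsym : Hq.IsSymm := by
    ext i j
    show Hq j i = Hq i j
    simp [hHqdef, Nat.add_comm]
  -- positive definiteness
  have hpos : ∀ x : Fin r → ℚ, x ≠ 0 → 0 < dotProduct x (Hq *ᵥ x) := by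
    intro x hx
    set xr : Fin r → ℝ := fun i => q (x i) with hxrdef
    have hxr : xr ≠ 0 := by
      intro h
      apply hx
      ext i
      have h2 := congrFun h i
      simp only [hxrdef, Pi.zero_apply, hqc, Rat.cast_eq_zero] at h2
      exact h2
    have hcast : q (dotProduct x (Hq *ᵥ x)) = dotProduct xr ((Hq.map q) *ᵥ xr) := by
      simp [dotProduct, Matrix.mulVec, map_sum, _root_.map_mul, hxrdef, Matrix.map_apply,
        Finset.mul_sum]
    rw [hHW] at hcast
    set w : Fin r → ℝ := Wᵀ *ᵥ xr with hwdef
    have h3 : dotProduct xr ((W * Wᵀ) *ᵥ xr) = dotProduct w w := by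
      rw [← Matrix.mulVec_mulVec, Matrix.dotProduct_mulVec, ← Matrix.mulVec_transpose]
    have hWT : IsUnit Wᵀ.det := by rwa [Matrix.det_transpose]
    have hw : w ≠ 0 := by
      intro h
      apply hxr
      have := congrArg (fun v => (Wᵀ)⁻¹ *ᵥ v) h
      simpa [hwdef, Matrix.mulVec_mulVec, Matrix.nonsing_inv_mul _ hWT] using this
    have h4 : 0 < dotProduct w w := by
      rcases lt_or_eq_of_le (Finset.sum_nonneg fun i _ => mul_self_nonneg (w i)) with h | h
      · exact h
      · exact absurd (dotProduct_self_eq_zero.mp h.symm) hw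
    have h5 : (0 : ℝ) < q (dotProduct x (Hq *ᵥ x)) := by rw [hcast, h3]; exact h4
    rw [hqc] at h5
    exact_mod_cast h5
  obtain ⟨L, d, hLdet, hdpos, hLDL⟩ := my_ldl Hq hHsym hpos
  have hLTdet : IsUnit Lᵀ.det := by rwa [Matrix.det_transpose]
  -- key intertwining identity over ℚ
  have key : Cq * Hq = Hq * Cqᵀ := by
    have hinj : Function.Injective fun N : Matrix (Fin r) (Fin r) ℚ => N.map q :=
      fun N₁ N₂ h => by
        ext i j
        exact q.injective (congrFun (congrFun h i) j)
    apply hinj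
    show (Cq * Hq).map q = (Hq * Cqᵀ).map q
    rw [Matrix.map_mul, Matrix.map_mul, hHW, Matrix.transpose_map]
    have h1 : Cq.map ⇑q * (W * Wᵀ) = W * Matrix.diagonal y * Wᵀ := by
      rw [← Matrix.mul_assoc, hCW]
    have h2 : W * Wᵀ * (Cq.map ⇑q)ᵀ = W * Matrix.diagonal y * Wᵀ := by
      rw [Matrix.mul_assoc, ← Matrix.transpose_mul, hCW, Matrix.transpose_mul,
        Matrix.diagonal_transpose, ← Matrix.mul_assoc]
    rw [h1, h2]
  -- the conjugated companion matrix and its symmetry identity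
  set Aq : Matrix (Fin r) (Fin r) ℚ := L⁻¹ * Cq * L with hAqdef
  have hAd : Aq * Matrix.diagonal d = Matrix.diagonal d * Aqᵀ := by
    have e1 : Aq * Matrix.diagonal d = L⁻¹ * (Cq * Hq) * (Lᵀ)⁻¹ := by
      rw [hLDL, hAqdef]
      simp only [Matrix.mul_assoc, Matrix.mul_nonsing_inv _ hLTdet, Matrix.mul_one]
    have e2 : Matrix.diagonal d * Aqᵀ = L⁻¹ * (Hq * Cqᵀ) * (Lᵀ)⁻¹ := by
      rw [hLDL, hAqdef]
      simp only [Matrix.transpose_mul, Matrix.transpose_nonsing_inv]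
      simp only [Matrix.mul_assoc, Matrix.nonsing_inv_mul_cancel_left _ _ hLdet]
    rw [e1, e2, key]
  have hentry : ∀ i j, Aq i j * d j = d i * Aq j i := by
    intro i j
    have h3 := congrFun (congrFun hAd i) j
    simpa [Matrix.mul_diagonal, Matrix.diagonal_mul, Matrix.transpose_apply] using h3
  -- the real symmetric matrix
  set s : Fin r → ℝ := fun k => Real.sqrt (d k) with hsdef
  have hspos : ∀ k, 0 < s k := fun k => Real.sqrt_pos.mpr (by exact_mod_cast hdpos k)
  have hs2 : ∀ k, s k * s k = (d k : ℝ) := fun k =>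
    Real.mul_self_sqrt (le_of_lt (by exact_mod_cast hdpos k))
  set A : Matrix (Fin r) (Fin r) ℝ :=
    Matrix.diagonal (fun k => (s k)⁻¹) * (Aq.map q) * Matrix.diagonal s with hAdef
  have hAentry : ∀ i j, A i j = (s i)⁻¹ * q (Aq i j) * s j := by
    intro i j
    simp [hAdef, Matrix.mul_diagonal, Matrix.diagonal_mul, Matrix.map_apply]
  refine ⟨d, A, hdpos, ?_, ?_, ?_⟩
  · intro i j
    rw [hAentry]
    have h1 : s i ∈ IntermediateField.adjoin ℚ (Set.range fun k => Real.sqrt ((d k : ℝ))) :=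
      IntermediateField.subset_adjoin _ _ ⟨i, rfl⟩
    have h2 : s j ∈ IntermediateField.adjoin ℚ (Set.range fun k => Real.sqrt ((d k : ℝ))) :=
      IntermediateField.subset_adjoin _ _ ⟨j, rfl⟩
    exact mul_mem (mul_mem (inv_mem h1) (IntermediateField.algebraMap_mem _ _)) h2
  · ext i j
    show A j i = A i j
    rw [hAentry, hAentry]
    have hd := hentry i j
    have hdR : (Aq i j : ℝ) * (d j : ℝ) = (d i : ℝ) * (Aq j i : ℝ) := by
      exact_mod_cast congrArg (fun t : ℚ => (t : ℝ)) hd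
    rw [hqc, hqc]
    rw [inv_mul_eq_div, inv_mul_eq_div, div_mul_eq_mul_div, div_mul_eq_mul_div,
      div_eq_div_iff (hspos j).ne' (hspos i).ne']
    rw [mul_assoc, hs2 i, mul_assoc, hs2 j]
    linear_combination -hdR
  · have hDinv : Matrix.diagonal (fun k => (s k)⁻¹) * Matrix.diagonal s = 1 := by
      rw [Matrix.diagonal_mul_diagonal,
        show (fun k => (s k)⁻¹ * s k) = fun _ => (1 : ℝ) from
          funext fun k => inv_mul_cancel₀ (hspos k).ne', Matrix.diagonal_one]
    have hDdet : IsUnit (Matrix.diagonal fun k => (s k)⁻¹).det := by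
      rw [Matrix.det_diagonal]
      exact isUnit_iff_ne_zero.mpr
        (Finset.prod_ne_zero_iff.mpr fun k _ => inv_ne_zero (hspos k).ne')
    have hA2 : A = Matrix.diagonal (fun k => (s k)⁻¹) * (Aq.map q) *
        (Matrix.diagonal fun k => (s k)⁻¹)⁻¹ := by
      rw [Matrix.inv_eq_right_inv hDinv]
    rw [hA2, my_charpoly_conj _ _ hDdet, Matrix.charpoly_map]
    have hAqC : Aq.charpoly = Cq.charpoly := by
      have hLinv : IsUnit (L⁻¹).det := Matrix.isUnit_nonsing_inv_det L hLdet
      have h4 : Aq = L⁻¹ * Cq * (L⁻¹)⁻¹ := by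
        rw [Matrix.nonsing_inv_nonsing_inv L hLdet, hAqdef]
      rw [h4, my_charpoly_conj _ _ hLinv]
    rw [hAqC, ← Matrix.charpoly_map, hCr, my_charpoly_conj _ _ hW, my_charpoly_diagonal]
    exact hroots.symm
end

section
/- Let K be a totally real Galois extension of ℚ with Galois group G and set r = [K:ℚ]. Then for any p ∈ K[x₁,…,xₙ] there exist positive integers l₁,…,l_r, a column vector q of length r with entries in ℚ[x₁,…,xₙ], and an r × binomial(r+1, 2) matrix C with entries in the subfield F = ℚ(√l₁,…,√l_r,√2) of ℝ, such that Σ_{σ ∈ G} (σp)² = qᵀ·C·Cᵀ·q. -/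
open Matrix

set_option maxHeartbeats 1000000 in
set_option synthInstance.maxHeartbeats 400000 in

/-- Let `K` be a totally real Galois extension of `ℚ` (realized as a Galois subfield of
`ℝ`, which is automatically totally real), with Galois group `G` and `r = [K:ℚ]`.
For any `p ∈ K[x₁,…,xₙ]` there are positive integers `l₁,…,l_r`, a vector `q` of `r`
polynomials in `ℚ[x₁,…,xₙ]`, and an `r × C(r+1,2)` matrix `C` with entries in the
subfield `F = ℚ(√l₁,…,√l_r,√2)` of `ℝ`, such that
`Σ_{σ ∈ G} (σp)² = qᵀ·C·Cᵀ·q` as polynomials with real coefficients. -/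
theorem stmt_11 (n : ℕ) (K : IntermediateField ℚ ℝ) [FiniteDimensional ℚ K]
    [IsGalois ℚ K] (p : MvPolynomial (Fin n) K) :
    ∃ (l : Fin (Module.finrank ℚ K) → ℕ)
      (q : Fin (Module.finrank ℚ K) → MvPolynomial (Fin n) ℚ)
      (C : Matrix (Fin (Module.finrank ℚ K)) (Fin ((Module.finrank ℚ K + 1).choose 2)) ℝ),
      (∀ k, 0 < l k) ∧
      (∀ i j, C i j ∈ IntermediateField.adjoin ℚ
        ((Set.range fun k => Real.sqrt (l k)) ∪ {Real.sqrt 2})) ∧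
      MvPolynomial.map (algebraMap K ℝ)
          (∑ σ : K ≃ₐ[ℚ] K, (MvPolynomial.map (σ : K →+* K) p) ^ 2) =
        ∑ i, ∑ j, MvPolynomial.C ((C * Cᵀ) i j) *
          (MvPolynomial.map (algebraMap ℚ ℝ) (q i) *
            MvPolynomial.map (algebraMap ℚ ℝ) (q j)) := by
  classical
  set r := Module.finrank ℚ K with hr
  obtain ⟨v, hv⟩ := LinearMap.BilinForm.exists_orthogonal_basis
    (B := Algebra.traceForm ℚ K) (LinearMap.BilinForm.isSymm_iff.1 (Algebra.traceForm_isSymm (R := ℚ) (S := K)))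
  set d : Fin r → ℚ := fun i => Algebra.trace ℚ K (v i * v i) with hd
  -- positivity of d
  have hdpos : ∀ i, 0 < d i := by
    intro i
    have h1 : algebraMap ℚ K (d i) = ∑ σ : K ≃ₐ[ℚ] K, σ (v i * v i) :=
      trace_eq_sum_automorphisms _
    have h2 : ((d i : ℝ)) = ∑ σ : K ≃ₐ[ℚ] K, ((σ (v i) : K) : ℝ) ^ 2 := by
      have := congrArg (algebraMap K ℝ) h1
      rw [← IsScalarTower.algebraMap_apply, map_sum] at this
      rw [eq_ratCast (algebraMap ℚ ℝ) (d i)] at this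
      simpa [_root_.map_mul, sq] using this
    have h3 : (0:ℝ) < (d i : ℝ) := by
      rw [h2]
      apply Finset.sum_pos' (fun σ _ => sq_nonneg _)
      refine ⟨1, Finset.mem_univ _, ?_⟩
      apply sq_pos_of_ne_zero
      simpa using v.ne_zero i
    exact_mod_cast h3
  set l : Fin r → ℕ := fun i => (d i).num.toNat * (d i).den with hl
  have hlpos : ∀ i, 0 < l i := by
    intro i
    have := hdpos i
    have hnum : 0 < (d i).num := Rat.num_pos.2 this
    exact Nat.mul_pos (by omega) (d i).pos
  have hlcast : ∀ i, (l i : ℝ) = (d i : ℝ) * ((d i).den : ℝ) ^ 2 := by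
    intro i
    have hnum : 0 < (d i).num := Rat.num_pos.2 (hdpos i)
    have : ((d i : ℝ)) = ((d i).num : ℝ) / ((d i).den : ℝ) := by
      exact_mod_cast congrArg (Rat.cast (K := ℝ)) (Rat.num_div_den (d i)).symm
    rw [this]
    have hden : ((d i).den : ℝ) ≠ 0 := by exact_mod_cast (d i).pos.ne'
    have htn : (((d i).num.toNat : ℕ) : ℝ) = ((d i).num : ℝ) := by
      exact_mod_cast Int.toNat_of_nonneg hnum.le
    field_simp [hl]
    simp only [hl, Nat.cast_mul, htn]
  have hsqrt : ∀ i, Real.sqrt (d i) = ((d i).den : ℝ)⁻¹ * Real.sqrt (l i) := by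
    intro i
    rw [hlcast i, Real.sqrt_mul (by exact_mod_cast (hdpos i).le), Real.sqrt_sq (by positivity)]
    have hden : (0:ℝ) < ((d i).den : ℝ) := by exact_mod_cast (d i).pos
    field_simp
  have hrle : r ≤ (r + 1).choose 2 := by
    rw [Nat.choose_two_right]
    simp only [Nat.add_sub_cancel]
    calc r = 2 * r / 2 := by omega
    _ ≤ (r + 1) * r / 2 := by
        apply Nat.div_le_div_right
        apply Nat.mul_le_mul_right
        have : 0 < r := Module.finrank_pos
        omega
  set C : Matrix (Fin r) (Fin ((r + 1).choose 2)) ℝ :=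
    fun i j => if Fin.castLE hrle i = j then Real.sqrt (d i) else 0 with hC
  -- q
  set q : Fin r → MvPolynomial (Fin n) ℚ :=
    fun i => ∑ m ∈ p.support, MvPolynomial.monomial m (v.repr (p.coeff m) i) with hqdef
  have hqcoeff : ∀ i m, (q i).coeff m = v.repr (p.coeff m) i := by
    intro i m
    rw [hqdef]
    simp only [MvPolynomial.coeff_sum, MvPolynomial.coeff_monomial]
    rw [Finset.sum_ite_eq' p.support m (fun m' => v.repr (p.coeff m') i)]
    by_cases h : m ∈ p.support
    · simp [h]
    · simp only [h, if_false]
      rw [MvPolynomial.notMem_support_iff.1 h]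
      simp
  refine ⟨l, q, C, hlpos, ?_, ?_⟩
  · intro i j
    rw [hC]
    dsimp only
    split
    · rw [hsqrt i]
      refine mul_mem (inv_mem ?_) (IntermediateField.subset_adjoin _ _ (Or.inl ⟨i, rfl⟩))
      exact natCast_mem _ _
    · exact zero_mem _
  · -- main identity
    have hdecomp : ∀ σ : K ≃ₐ[ℚ] K, MvPolynomial.map (σ : K →+* K) p =
        ∑ i : Fin r, MvPolynomial.C (σ (v i)) *
          MvPolynomial.map (algebraMap ℚ K) (q i) := by
      intro σ
      have hx : ∀ x : K, σ x = ∑ i, σ (v i) * algebraMap ℚ K (v.repr x i) := by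
        intro x
        conv_lhs => rw [← v.sum_repr x]
        rw [map_sum]
        exact Finset.sum_congr rfl fun i _ => by
          rw [Algebra.smul_def, _root_.map_mul, AlgEquiv.commutes, mul_comm]
      refine MvPolynomial.ext _ _ fun m => ?_
      rw [MvPolynomial.coeff_map, MvPolynomial.coeff_sum]
      simp only [MvPolynomial.coeff_C_mul, MvPolynomial.coeff_map, hqcoeff]
      exact hx (p.coeff m)
    have hCC : ∀ i j, (C * Cᵀ) i j = if i = j then (d i : ℝ) else 0 := by
      intro i j
      rw [Matrix.mul_apply]
      by_cases h : i = j
      · subst h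
        rw [Finset.sum_eq_single (Fin.castLE hrle i)]
        · have : (0:ℝ) ≤ (d i : ℝ) := by exact_mod_cast (hdpos i).le
          simp [hC, Matrix.transpose, Matrix.of_apply, Real.mul_self_sqrt this]
        · intro k _ hk
          simp [hC, Matrix.transpose_apply, Ne.symm hk]
        · intro h; exact absurd (Finset.mem_univ _) h
      · rw [Finset.sum_eq_zero, if_neg h]
        intro k _
        simp only [hC, Matrix.transpose_apply]
        by_cases hik : Fin.castLE hrle i = k
        · have hjk : Fin.castLE hrle j ≠ k := by
            rw [← hik]
            simp only [ne_eq, Fin.castLE_inj]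
            exact Ne.symm h
          simp [hjk, Matrix.transpose, Matrix.of_apply]
        · simp [hik]
    -- key computation over K
    have key : (∑ σ : K ≃ₐ[ℚ] K, (MvPolynomial.map (σ : K →+* K) p) ^ 2)
        = ∑ i : Fin r, MvPolynomial.C (algebraMap ℚ K (d i)) *
            (MvPolynomial.map (algebraMap ℚ K) (q i) *
             MvPolynomial.map (algebraMap ℚ K) (q i)) := by
      calc ∑ σ : K ≃ₐ[ℚ] K, (MvPolynomial.map (σ : K →+* K) p) ^ 2
          = ∑ σ : K ≃ₐ[ℚ] K, ∑ i : Fin r, ∑ j : Fin r,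
              MvPolynomial.C (σ (v i * v j)) *
              (MvPolynomial.map (algebraMap ℚ K) (q i) *
               MvPolynomial.map (algebraMap ℚ K) (q j)) := by
            refine Finset.sum_congr rfl fun σ _ => ?_
            rw [sq, hdecomp σ, Finset.sum_mul_sum]
            refine Finset.sum_congr rfl fun i _ => Finset.sum_congr rfl fun j _ => ?_
            rw [_root_.map_mul σ, MvPolynomial.C_mul]
            ring
      _ = ∑ i : Fin r, ∑ j : Fin r,
              MvPolynomial.C (algebraMap ℚ K (Algebra.trace ℚ K (v i * v j))) *
              (MvPolynomial.map (algebraMap ℚ K) (q i) *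
               MvPolynomial.map (algebraMap ℚ K) (q j)) := by
            rw [Finset.sum_comm]
            refine Finset.sum_congr rfl fun i _ => ?_
            rw [Finset.sum_comm]
            refine Finset.sum_congr rfl fun j _ => ?_
            rw [← Finset.sum_mul, trace_eq_sum_automorphisms, map_sum MvPolynomial.C]
      _ = _ := by
            refine Finset.sum_congr rfl fun i _ => ?_
            rw [Finset.sum_eq_single i]
            · intro j _ hji
              have h0 : Algebra.trace ℚ K (v i * v j) = 0 := hv (Ne.symm hji)
              simp [h0]
            · intro h; exact absurd (Finset.mem_univ i) h
    rw [key, map_sum (MvPolynomial.map (algebraMap (↥K) ℝ)) _ Finset.univ]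
    refine Finset.sum_congr rfl fun i _ => ?_
    rw [Finset.sum_eq_single i]
    · rw [hCC]
      simp only [if_pos rfl]
      rw [_root_.map_mul (MvPolynomial.map (algebraMap (↥K) ℝ)),
        _root_.map_mul (MvPolynomial.map (algebraMap (↥K) ℝ)),
        MvPolynomial.map_C, MvPolynomial.map_map,
        ← IsScalarTower.algebraMap_eq ℚ (↥K) ℝ,
        ← IsScalarTower.algebraMap_apply ℚ (↥K) ℝ, eq_ratCast (algebraMap ℚ ℝ) (d i)]
      simp
    · intro j _ hji
      rw [hCC]
      simp [Ne.symm hji]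
    · intro h; exact absurd (Finset.mem_univ i) h
end

section
/- Let K be a finite Galois extension of ℚ with Galois group G and set r = [K:ℚ]. Then for any p ∈ K[x₁,…,xₙ] there exist integers l₁,…,l_r (not necessarily positive), a column vector q of length r with entries in ℚ[x₁,…,xₙ], and an r × binomial(r+1, 2) matrix C with entries in the field F = ℚ(√l₁,…,√l_r,√2), such that Σ_{σ ∈ G} (σp)² = qᵀ·C·Cᵀ·q. -/
open Matrix

lemma aux_int_sqrt (l : ℤ) : ∃ s : ℂ, s ^ 2 = (l : ℂ) := by
  rcases le_or_gt 0 l with h | h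
  · refine ⟨((Real.sqrt l : ℝ) : ℂ), ?_⟩
    rw [← Complex.ofReal_pow, Real.sq_sqrt (by exact_mod_cast h)]
    push_cast; ring
  · refine ⟨Complex.I * ((Real.sqrt (-(l:ℝ)) : ℝ) : ℂ), ?_⟩
    rw [mul_pow, Complex.I_sq, ← Complex.ofReal_pow,
      Real.sq_sqrt (by
        have hl : (l:ℝ) < 0 := by exact_mod_cast h
        linarith : (0:ℝ) ≤ -(l:ℝ))]
    push_cast; ring

lemma aux_rat_sqrt (w : ℚ) : ∃ (l : ℤ) (s : ℂ),
    s ^ 2 = (l : ℂ) ∧ (s / (w.den : ℂ)) ^ 2 = (w : ℂ) := by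
  obtain ⟨s, hs⟩ := aux_int_sqrt (w.num * w.den)
  refine ⟨w.num * w.den, s, hs, ?_⟩
  have hden : ((w.den : ℂ)) ≠ 0 := by
    exact_mod_cast Nat.cast_ne_zero.mpr w.den_nz
  rw [div_pow, hs, Rat.cast_def]
  push_cast
  field_simp

set_option maxHeartbeats 2000000 in
set_option synthInstance.maxHeartbeats 400000 in
/-- Let `K` be a finite Galois extension of `ℚ` (realized as a Galois subfield of `ℂ`),
with Galois group `G` and `r = [K:ℚ]`. For any `p ∈ K[x₁,…,xₙ]` there are integers
`l₁,…,l_r` (not necessarily positive), complex square roots `s_k` of the `l_k` and a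
square root `s₂` of `2`, a vector `q` of `r` polynomials in `ℚ[x₁,…,xₙ]`, and an
`r × C(r+1,2)` matrix `C` with entries in the subfield `F = ℚ(√l₁,…,√l_r,√2)` of `ℂ`,
such that `Σ_{σ ∈ G} (σp)² = qᵀ·C·Cᵀ·q` as polynomials with complex coefficients. -/
theorem stmt_12 (n : ℕ) (K : IntermediateField ℚ ℂ) [FiniteDimensional ℚ K]
    [IsGalois ℚ K] (p : MvPolynomial (Fin n) K) :
    ∃ (l : Fin (Module.finrank ℚ K) → ℤ)
      (s : Fin (Module.finrank ℚ K) → ℂ) (s₂ : ℂ)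
      (q : Fin (Module.finrank ℚ K) → MvPolynomial (Fin n) ℚ)
      (C : Matrix (Fin (Module.finrank ℚ K)) (Fin ((Module.finrank ℚ K + 1).choose 2)) ℂ),
      (∀ k, (s k) ^ 2 = (l k : ℂ)) ∧
      s₂ ^ 2 = 2 ∧
      (∀ i j, C i j ∈ IntermediateField.adjoin ℚ (Set.range s ∪ {s₂})) ∧
      MvPolynomial.map (algebraMap K ℂ)
          (∑ σ : K ≃ₐ[ℚ] K, (MvPolynomial.map (σ : K →+* K) p) ^ 2) =
        ∑ i, ∑ j, MvPolynomial.C ((C * Cᵀ) i j) *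
          (MvPolynomial.map (algebraMap ℚ ℂ) (q i) *
            MvPolynomial.map (algebraMap ℚ ℂ) (q j)) := by
  classical
  set r := Module.finrank ℚ K with hr
  set N := (r + 1).choose 2 with hN
  have hrN : r ≤ N := by
    rw [hN, Nat.choose_two_right]
    rcases Nat.eq_zero_or_pos r with h0 | h0
    · simp [h0]
    · rw [Nat.add_sub_cancel]
      rw [Nat.le_div_iff_mul_le (by norm_num)]
      nlinarith
  -- diagonalize the trace form
  haveI : Invertible (2 : ℚ) := invertibleOfNonzero (by norm_num)
  set Q : QuadraticForm ℚ K := (Algebra.traceForm ℚ K).toQuadraticMap with hQdef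
  obtain ⟨w, ⟨φ⟩⟩ := Q.equivalent_weightedSumSquares
  -- trace identity
  have htr : ∀ x y : K, Algebra.trace ℚ K (x * y) = ∑ k : Fin r, w k * (φ x k * φ y k) := by
    intro x y
    have happ : ∀ z : K, ∑ k : Fin r, w k * (φ z k * φ z k) = Algebra.trace ℚ K (z * z) := by
      intro z
      have := φ.map_app z
      rw [QuadraticMap.weightedSumSquares_apply] at this
      simpa [hQdef, LinearMap.BilinMap.toQuadraticMap_apply, Algebra.traceForm_apply,
        smul_eq_mul] using this
    have e1 := happ (x + y)
    have e2 := happ x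
    have e3 := happ y
    have hφ : ∀ k, φ (x + y) k = φ x k + φ y k := by
      intro k; rw [map_add]; rfl
    simp only [hφ] at e1
    have hmul : (x + y) * (x + y) = x * x + (y * y + (x * y + x * y)) := by ring
    rw [hmul, map_add, map_add, map_add] at e1
    have hsum : ∑ k : Fin r, w k * ((φ x k + φ y k) * (φ x k + φ y k)) =
        (∑ k : Fin r, w k * (φ x k * φ x k)) + (∑ k : Fin r, w k * (φ y k * φ y k)) +
        2 * ∑ k : Fin r, w k * (φ x k * φ y k) := by
      rw [Finset.mul_sum, ← Finset.sum_add_distrib, ← Finset.sum_add_distrib]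
      exact Finset.sum_congr rfl fun k _ => by ring
    rw [hsum, e2, e3] at e1
    linarith
  -- square roots of the weights
  have hsq : ∀ k : Fin r, ∃ (l : ℤ) (s : ℂ),
      s ^ 2 = (l : ℂ) ∧ (s / ((w k).den : ℂ)) ^ 2 = ((w k : ℚ) : ℂ) := fun k =>
    aux_rat_sqrt (w k)
  choose l s hs ht using hsq
  set t : Fin r → ℂ := fun k => s k / ((w k).den : ℂ) with htdef
  -- the basis and the rational coordinate polynomials
  set b := Module.finBasis ℚ K with hbdef
  set q : Fin r → MvPolynomial (Fin n) ℚ := fun i =>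
    ∑ m ∈ p.support, MvPolynomial.monomial m (b.repr (p.coeff m) i) with hqdef
  have hqc : ∀ i m, (q i).coeff m = b.repr (p.coeff m) i := by
    intro i m
    rw [hqdef]
    simp only [MvPolynomial.coeff_sum, MvPolynomial.coeff_monomial]
    rw [Finset.sum_ite_eq' p.support m (fun m => b.repr (p.coeff m) i)]
    split_ifs with h
    · rfl
    · rw [MvPolynomial.notMem_support_iff.mp h]
      simp
  have ht' : ∀ k, t k ^ 2 = ((w k : ℚ) : ℂ) := fun k => ht k
  -- the matrix
  set D : Fin r → Fin r → ℂ := fun k i => t k * ((φ (b i) k : ℚ) : ℂ) with hDdef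
  set C : Matrix (Fin r) (Fin N) ℂ :=
    Matrix.of (fun i j => if h : (j : ℕ) < r then D ⟨j, h⟩ i else 0) with hCdef
  have hCe : ∀ i j, C i j = if h : ((j : Fin N) : ℕ) < r then D ⟨j, h⟩ i else 0 :=
    fun i j => rfl
  have hCC : ∀ i j, (C * Cᵀ) i j =
      ∑ k : Fin r, (t k * ((φ (b i) k : ℚ) : ℂ)) * (t k * ((φ (b j) k : ℚ) : ℂ)) := by
    intro i j
    rw [Matrix.mul_apply]
    have step1 : ∀ k : Fin N, C i k * Cᵀ k j =
        (fun m : ℕ => if h : m < r then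
          (t ⟨m, h⟩ * ((φ (b i) ⟨m, h⟩ : ℚ) : ℂ)) * (t ⟨m, h⟩ * ((φ (b j) ⟨m, h⟩ : ℚ) : ℂ))
          else 0) (k : ℕ) := by
      intro k
      rw [Matrix.transpose_apply, hCe, hCe]
      dsimp only
      rcases lt_or_ge (k : ℕ) r with h | h
      · simp only [dif_pos h]
        rfl
      · simp [dif_neg (by omega : ¬ (k : ℕ) < r)]
    calc ∑ k : Fin N, C i k * Cᵀ k j
        = ∑ m ∈ Finset.range N, (fun m : ℕ => if h : m < r then
            (t ⟨m, h⟩ * ((φ (b i) ⟨m, h⟩ : ℚ) : ℂ)) * (t ⟨m, h⟩ * ((φ (b j) ⟨m, h⟩ : ℚ) : ℂ))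
            else 0) m := by
          rw [← Fin.sum_univ_eq_sum_range]
          exact Finset.sum_congr rfl fun k _ => step1 k
      _ = ∑ m ∈ Finset.range r, (fun m : ℕ => if h : m < r then
            (t ⟨m, h⟩ * ((φ (b i) ⟨m, h⟩ : ℚ) : ℂ)) * (t ⟨m, h⟩ * ((φ (b j) ⟨m, h⟩ : ℚ) : ℂ))
            else 0) m := by
          refine (Finset.sum_subset (Finset.range_subset_range.mpr hrN) ?_).symm
          intro m _ hm
          rw [Finset.mem_range, not_lt] at hm
          exact dif_neg (by omega)
      _ = ∑ k : Fin r, (t k * ((φ (b i) k : ℚ) : ℂ)) * (t k * ((φ (b j) k : ℚ) : ℂ)) := by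
          rw [← Fin.sum_univ_eq_sum_range]
          exact Finset.sum_congr rfl fun k _ => by rw [dif_pos k.2]
  -- the matrix entries realize the trace form
  have hAC : ∀ i j, (C * Cᵀ) i j =
      algebraMap ℚ ℂ (Algebra.trace ℚ K (b i * b j)) := by
    intro i j
    rw [hCC, htr (b i) (b j), map_sum]
    refine Finset.sum_congr rfl fun k _ => ?_
    rw [_root_.map_mul, _root_.map_mul, eq_ratCast, eq_ratCast, eq_ratCast, ← ht' k]
    ring
  refine ⟨l, s, ((Real.sqrt 2 : ℝ) : ℂ), q, C, hs, ?_, ?_, ?_⟩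
  · rw [← Complex.ofReal_pow, Real.sq_sqrt (by norm_num : (0:ℝ) ≤ 2)]
    norm_num
  · -- membership
    intro i j
    have hrat : ∀ x : ℚ, ((x : ℂ)) ∈
        IntermediateField.adjoin ℚ (Set.range s ∪ {((Real.sqrt 2 : ℝ) : ℂ)}) := by
      intro x
      have := IntermediateField.algebraMap_mem
        (IntermediateField.adjoin ℚ (Set.range s ∪ {((Real.sqrt 2 : ℝ) : ℂ)})) x
      rwa [eq_ratCast] at this
    rw [hCe]
    split_ifs with h
    · refine mul_mem (div_mem ?_ ?_) ?_
      · exact IntermediateField.subset_adjoin ℚ _ (Or.inl ⟨⟨j, h⟩, rfl⟩)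
      · exact_mod_cast hrat (((w ⟨j, h⟩).den : ℚ))
      · exact hrat (φ (b i) ⟨j, h⟩)
    · exact zero_mem _
  · -- the main polynomial identity
    set Qp : Fin r → MvPolynomial (Fin n) ℂ := fun i =>
      MvPolynomial.map (algebraMap ℚ ℂ) (q i) with hQpdef
    have hmap : ∀ (ψ : ↥K →+* ℂ), ψ.comp (algebraMap ℚ K) = algebraMap ℚ ℂ →
        MvPolynomial.map ψ p = ∑ i : Fin r, MvPolynomial.C (ψ (b i)) * Qp i := by
      intro ψ hψ
      ext m
      rw [MvPolynomial.coeff_map, MvPolynomial.coeff_sum]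
      simp only [hQpdef, MvPolynomial.coeff_C_mul, MvPolynomial.coeff_map, hqc]
      have h1 : ψ (p.coeff m) = ∑ i : Fin r, ψ ((b.repr (p.coeff m) i) • b i) := by
        rw [← map_sum ψ]
        exact congrArg ψ (b.sum_repr (p.coeff m)).symm
      rw [h1]
      refine Finset.sum_congr rfl fun i _ => ?_
      rw [Algebra.smul_def, _root_.map_mul, ← RingHom.comp_apply, hψ]
      ring
    have key : ∀ σ : K ≃ₐ[ℚ] K,
        MvPolynomial.map (algebraMap K ℂ) (MvPolynomial.map (σ : K →+* K) p) =
        ∑ i : Fin r, MvPolynomial.C (algebraMap K ℂ (σ (b i))) * Qp i := by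
      intro σ
      rw [MvPolynomial.map_map]
      have hψ : ((algebraMap K ℂ).comp (σ : K →+* K)).comp (algebraMap ℚ K) =
          algebraMap ℚ ℂ := by
        ext x
        simp only [RingHom.comp_apply, AlgEquiv.coe_ringEquiv]
        rw [show ((σ : K →+* K) (algebraMap ℚ K x)) = σ (algebraMap ℚ K x) from rfl,
          AlgEquiv.commutes, ← IsScalarTower.algebraMap_apply]
      rw [hmap _ hψ]
      rfl
    have hsplit : MvPolynomial.map (algebraMap K ℂ)
        (∑ σ : K ≃ₐ[ℚ] K, (MvPolynomial.map (σ : K →+* K) p) ^ 2) =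
        ∑ σ : K ≃ₐ[ℚ] K,
          MvPolynomial.map (algebraMap K ℂ) ((MvPolynomial.map (σ : K →+* K) p) ^ 2) :=
      map_sum _ _ _
    rw [hsplit]
    have expand : ∀ σ : K ≃ₐ[ℚ] K,
        MvPolynomial.map (algebraMap K ℂ) ((MvPolynomial.map (σ : K →+* K) p) ^ 2) =
        ∑ i : Fin r, ∑ j : Fin r,
          MvPolynomial.C (algebraMap K ℂ (σ (b i)) * algebraMap K ℂ (σ (b j))) *
            (Qp i * Qp j) := by
      intro σ
      rw [map_pow, key σ, sq, Finset.sum_mul_sum]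
      refine Finset.sum_congr rfl fun i _ => Finset.sum_congr rfl fun j _ => ?_
      rw [MvPolynomial.C_mul]
      ring
    rw [Finset.sum_congr rfl fun σ _ => expand σ, Finset.sum_comm]
    refine Finset.sum_congr rfl fun i _ => ?_
    rw [Finset.sum_comm]
    refine Finset.sum_congr rfl fun j _ => ?_
    rw [← Finset.sum_mul, ← map_sum MvPolynomial.C]
    congr 1
    have : ∑ σ : K ≃ₐ[ℚ] K, algebraMap K ℂ (σ (b i)) * algebraMap K ℂ (σ (b j)) =
        algebraMap K ℂ (∑ σ : K ≃ₐ[ℚ] K, σ (b i * b j)) := by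
      rw [map_sum (algebraMap (↥K) ℂ) _ Finset.univ]
      exact Finset.sum_congr rfl fun σ _ => by rw [_root_.map_mul, _root_.map_mul]
    rw [this, ← trace_eq_sum_automorphisms, ← IsScalarTower.algebraMap_apply, hAC]
end

section
/- Let l₁,…,l_{r+1} be positive integers and let L = ℚ(√l₁,…,√l_{r+1}) be the subfield of ℝ generated over ℚ by their real square roots. If f ∈ ℚ[x₁,…,xₙ] is a sum of s squares of polynomials in L[x₁,…,xₙ], then f is a rational sum of at most s·2^{r+1} squares in ℚ[x₁,…,xₙ]. -/
set_option maxHeartbeats 1000000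
open IntermediateField Module

theorem aux_findim (s : Finset ℝ) (hs : ∀ x ∈ s, ∃ q : ℚ, (q : ℝ) = x ^ 2) :
    FiniteDimensional ℚ (adjoin ℚ (s : Set ℝ)) ∧
    finrank ℚ (adjoin ℚ (s : Set ℝ)) ≤ 2 ^ s.card := by
  classical
  induction s using Finset.induction_on with
  | empty =>
      have h0 : adjoin ℚ ((∅ : Finset ℝ) : Set ℝ) = ⊥ := by
        rw [Finset.coe_empty, adjoin_empty]
      rw [h0, Finset.card_empty, pow_zero]
      exact ⟨inferInstance, le_of_eq (IntermediateField.finrank_bot)⟩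
  | @insert x s hx ih =>
      obtain ⟨hfd, hrank⟩ := ih (fun y hy => hs y (Finset.mem_insert_of_mem hy))
      set K := adjoin ℚ (s : Set ℝ) with hK
      obtain ⟨q, hq⟩ := hs x (Finset.mem_insert_self x s)
      have hint : IsIntegral K x := by
        refine ⟨Polynomial.X ^ 2 - Polynomial.C (algebraMap ℚ K q), ?_, ?_⟩
        · exact Polynomial.monic_X_pow_sub_C _ (by norm_num)
        · simp only [Polynomial.eval₂_sub, Polynomial.eval₂_pow, Polynomial.eval₂_X,
            Polynomial.eval₂_C]
          have : (algebraMap K ℝ) (algebraMap ℚ K q) = (q : ℝ) := by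
            simp [IsScalarTower.algebraMap_apply ℚ K ℝ]
          rw [this, hq]; ring
      haveI : FiniteDimensional K K⟮x⟯ := adjoin.finiteDimensional hint
      have hdeg : finrank K K⟮x⟯ ≤ 2 := by
        rw [adjoin.finrank hint]
        have h2 : (minpoly K x).degree ≤ (Polynomial.X ^ 2 - Polynomial.C (algebraMap ℚ K q)).degree := by
          apply minpoly.degree_le_of_ne_zero
          · intro h
            have := Polynomial.monic_X_pow_sub_C (algebraMap ℚ K q) (two_ne_zero)
            exact this.ne_zero h
          · simp only [map_sub, Polynomial.aeval_X_pow, Polynomial.aeval_C]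
            have : (algebraMap K ℝ) (algebraMap ℚ K q) = (q : ℝ) := by
              simp [IsScalarTower.algebraMap_apply ℚ K ℝ]
            rw [this, hq]; ring
        have hd : (Polynomial.X ^ 2 - Polynomial.C (algebraMap ℚ K q)).degree = 2 := by
          rw [Polynomial.degree_X_pow_sub_C] <;> norm_num
        rw [hd] at h2
        exact Polynomial.natDegree_le_iff_degree_le.mpr h2
      have hadj : adjoin ℚ (↑(insert x s) : Set ℝ) = (adjoin K {x}).restrictScalars ℚ := by
        have hsets : (↑(insert x s) : Set ℝ) = ↑s ∪ {x} := by
          rw [Finset.coe_insert, Set.insert_eq, Set.union_comm]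
        rw [hsets]
        exact (adjoin_adjoin_left ℚ (s : Set ℝ) {x}).symm
      rw [hadj]
      constructor
      · exact FiniteDimensional.trans ℚ K K⟮x⟯
      · have : finrank ℚ ((adjoin K {x}).restrictScalars ℚ) = finrank ℚ K * finrank K K⟮x⟯ :=
          (Module.finrank_mul_finrank ℚ K K⟮x⟯).symm
        rw [this, Finset.card_insert_of_notMem hx, pow_succ]
        exact Nat.mul_le_mul hrank hdeg |>.trans (by ring_nf; rfl)
open IntermediateField Module

theorem aux_im (r : ℕ) (l : Fin (r + 1) → ℕ) (hl : ∀ k, 0 < l k)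
    (L : IntermediateField ℚ ℝ)
    (hL : L = adjoin ℚ (Set.range fun k => Real.sqrt (l k)))
    (σ : L →ₐ[ℚ] ℂ) (y : L) : (σ y).im = 0 := by
  have hmem : ∀ {z : ℝ}, z ∈ adjoin ℚ (Set.range fun k => Real.sqrt (l k)) → z ∈ L := by
    intro z h; rw [hL]; exact h
  obtain ⟨x, hx⟩ := y
  have hx' : x ∈ adjoin ℚ (Set.range fun k => Real.sqrt (l k)) := by rwa [← hL]
  revert hx
  refine adjoin_induction (p := fun z _ => ∀ hz : z ∈ L, (σ ⟨z, hz⟩).im = 0)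
    (mem := ?_) (algebraMap := ?_) (add := ?_) (inv := ?_) (mul := ?_) (h := hx')
  · intro x hmemx hz
    obtain ⟨k, rfl⟩ := hmemx
    have hsq : (⟨Real.sqrt (l k), hz⟩ : L) * ⟨Real.sqrt (l k), hz⟩ =
        algebraMap ℚ L ((l k : ℚ)) := by
      apply Subtype.ext
      show Real.sqrt (l k) * Real.sqrt (l k) = _
      rw [Real.mul_self_sqrt (by positivity : (0:ℝ) ≤ (l k : ℝ))]
      norm_num
    set a := σ ⟨Real.sqrt (l k), hz⟩ with ha
    have h2 : a * a = ((l k : ℚ) : ℂ) := by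
      rw [ha, ← map_mul, hsq, AlgHom.commutes, eq_ratCast]
    have hre : (a * a).re = (l k : ℝ) := by rw [h2]; push_cast; simp
    have him : (a * a).im = 0 := by rw [h2]; simp
    rw [Complex.mul_im] at him
    rw [Complex.mul_re] at hre
    have hlk : (0:ℝ) < (l k : ℝ) := by exact_mod_cast hl k
    by_contra hne
    have h3 : a.re * a.im = 0 := by linarith
    have h4 : a.re = 0 := by
      rcases mul_eq_zero.mp h3 with h | h
      · exact h
      · exact absurd h hne
    rw [h4] at hre
    nlinarith [sq_nonneg a.im]
  · intro q hz
    have : (⟨algebraMap ℚ ℝ q, hz⟩ : L) = algebraMap ℚ L q := rfl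
    rw [this, AlgHom.commutes]; simp
  · intro x y hxa hya ihx ihy hz
    have hxL : x ∈ L := hmem hxa
    have hyL : y ∈ L := hmem hya
    have : (⟨x + y, hz⟩ : L) = ⟨x, hxL⟩ + ⟨y, hyL⟩ := rfl
    rw [this, map_add, Complex.add_im, ihx hxL, ihy hyL, add_zero]
  · intro x hxa ihx hz
    have hxL : x ∈ L := hmem hxa
    have : (⟨x⁻¹, hz⟩ : L) = (⟨x, hxL⟩)⁻¹ := rfl
    rw [this, map_inv₀, Complex.inv_im, ihx hxL, neg_zero, zero_div]
  · intro x y hxa hya ihx ihy hz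
    have hxL : x ∈ L := hmem hxa
    have hyL : y ∈ L := hmem hya
    have : (⟨x * y, hz⟩ : L) = ⟨x, hxL⟩ * ⟨y, hyL⟩ := rfl
    rw [this, map_mul, Complex.mul_im, ihx hxL, ihy hyL]
    ring

theorem aux_tracepos (r : ℕ) (l : Fin (r + 1) → ℕ) (hl : ∀ k, 0 < l k)
    (L : IntermediateField ℚ ℝ)
    (hL : L = adjoin ℚ (Set.range fun k => Real.sqrt (l k)))
    [FiniteDimensional ℚ L]
    (y : L) (hy : y ≠ 0) :
    0 < Algebra.trace ℚ L (y * y) := by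
  have htr := trace_eq_sum_embeddings (E := ℂ) (K := ℚ) (x := y * y)
  have hre : ((Algebra.trace ℚ L (y * y) : ℚ) : ℝ) = ∑ σ : L →ₐ[ℚ] ℂ, ((σ y).re) ^ 2 := by
    have h0 := congrArg Complex.re htr
    rw [show ((algebraMap ℚ ℂ) (Algebra.trace ℚ L (y*y))).re
        = ((Algebra.trace ℚ L (y*y) : ℚ) : ℝ) from by norm_cast] at h0
    rw [h0, Complex.re_sum]
    apply Finset.sum_congr rfl
    intro σ _
    rw [map_mul, Complex.mul_re, aux_im r l hl L hL σ y]
    ring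
  have hpos : (0:ℝ) < ∑ σ : L →ₐ[ℚ] ℂ, ((σ y).re) ^ 2 := by
    set σ₀ : L →ₐ[ℚ] ℂ := (Complex.ofRealAm.restrictScalars ℚ).comp L.val with hσ₀
    apply Finset.sum_pos' (fun σ _ => sq_nonneg _) ⟨σ₀, Finset.mem_univ _, ?_⟩
    have h1 : (σ₀ y).re = (y : ℝ) := by simp [hσ₀, Complex.ofRealAm, Algebra.ofId_apply, Complex.coe_algebraMap]; rfl
    rw [h1]
    have h2 : (y : ℝ) ≠ 0 := fun h => hy (Subtype.ext h)
    positivity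
  rw [← hre] at hpos
  exact_mod_cast hpos
open IntermediateField Module

theorem aux_diag (L : IntermediateField ℚ ℝ) [FiniteDimensional ℚ L]
    (hpos : ∀ y : L, y ≠ 0 → 0 < Algebra.trace ℚ L (y * y)) :
    ∃ (c : Fin (finrank ℚ L) → ℚ) (lam : Fin (finrank ℚ L) → (L →ₗ[ℚ] ℚ)),
      (∀ j, 0 < c j) ∧
      ∀ y z : L, Algebra.trace ℚ L (y * z) = ∑ j, c j * lam j y * lam j z := by
  classical
  obtain ⟨v, hv⟩ := LinearMap.BilinForm.exists_orthogonal_basis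
    (B := Algebra.traceForm ℚ ↥L) (LinearMap.BilinForm.isSymm_iff.mp (Algebra.traceForm_isSymm (R := ℚ) (S := ↥L)))
  refine ⟨fun j => Algebra.trace ℚ L (v j * v j), fun j => v.coord j, ?_, ?_⟩
  · intro j
    exact hpos (v j) (v.ne_zero j)
  · intro y z
    have expand : Algebra.traceForm ℚ L y z =
        ∑ i, ∑ j, v.repr y i * v.repr z j * Algebra.traceForm ℚ L (v i) (v j) := by
      conv_lhs => rw [← v.sum_repr y, ← v.sum_repr z]
      simp only [map_sum, map_smul, LinearMap.coe_sum, Finset.sum_apply,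
        LinearMap.smul_apply, smul_eq_mul]
      rw [Finset.sum_comm]
      refine Finset.sum_congr rfl fun i _ => ?_
      rw [Finset.mul_sum]
      exact Finset.sum_congr rfl fun j _ => by ring
    have := expand
    rw [Algebra.traceForm_apply] at this
    rw [this]
    refine Finset.sum_congr rfl fun i _ => ?_
    rw [Finset.sum_eq_single i]
    · rw [Algebra.traceForm_apply]
      simp only [Basis.coord_apply]
      ring
    · intro j _ hji
      rw [hv (Ne.symm hji)]
      ring
    · intro h
      exact absurd (Finset.mem_univ i) h


/-- Descent through multiquadratic extensions: let `l₁,…,l_{r+1}` be positive integers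
and `L = ℚ(√l₁,…,√l_{r+1}) ⊆ ℝ`. If `f ∈ ℚ[x₁,…,xₙ]` is a sum of `s` squares in
`L[x₁,…,xₙ]`, then `f` is a rational sum of at most `s·2^(r+1)` squares in
`ℚ[x₁,…,xₙ]` (a linear combination of squares with positive rational coefficients). -/
theorem stmt_14 (n r s : ℕ) (l : Fin (r + 1) → ℕ) (hl : ∀ k, 0 < l k)
    (L : IntermediateField ℚ ℝ)
    (hL : L = IntermediateField.adjoin ℚ (Set.range fun k => Real.sqrt (l k)))
    (f : MvPolynomial (Fin n) ℚ)
    (p : Fin s → MvPolynomial (Fin n) L)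
    (hf : MvPolynomial.map (algebraMap ℚ L) f = ∑ i, (p i) ^ 2) :
    ∃ (t : ℕ) (c : Fin t → ℚ) (q : Fin t → MvPolynomial (Fin n) ℚ),
      t ≤ s * 2 ^ (r + 1) ∧ (∀ i, 0 < c i) ∧ f = ∑ i, c i • (q i) ^ 2 := by
  classical
  have hset : (Set.range fun k => Real.sqrt (l k)) =
      ↑(Finset.image (fun k => Real.sqrt (l k)) Finset.univ) := by simp
  have hsq : ∀ x ∈ Finset.image (fun k => Real.sqrt (l k)) Finset.univ,
      ∃ q : ℚ, (q : ℝ) = x ^ 2 := by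
    intro x hx
    simp only [Finset.mem_image, Finset.mem_univ, true_and] at hx
    obtain ⟨k, rfl⟩ := hx
    exact ⟨(l k : ℚ), by rw [sq, Real.mul_self_sqrt (by positivity)]; norm_num⟩
  have hAF := aux_findim (Finset.image (fun k => Real.sqrt (l k)) Finset.univ) hsq
  haveI hFD : FiniteDimensional ℚ L := by rw [hL, hset]; exact hAF.1
  have hrank : finrank ℚ L ≤ 2 ^ (r + 1) := by
    rw [hL, hset]
    refine hAF.2.trans (Nat.pow_le_pow_right (by norm_num) ?_)
    exact (Finset.card_image_le).trans (by simp)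
  have hpos := aux_tracepos r l hl L hL
  obtain ⟨c0, lam, hc0, hdiag⟩ := aux_diag L hpos
  have hdpos : 0 < finrank ℚ L := finrank_pos
  have hd0 : ((finrank ℚ L : ℚ)) ≠ 0 := by exact_mod_cast hdpos.ne'
  -- coefficientwise linear maps on polynomials
  let Lam : Fin (finrank ℚ L) → MvPolynomial (Fin n) L → MvPolynomial (Fin n) ℚ :=
    fun j P => ∑ m ∈ P.support, MvPolynomial.monomial m (lam j (P.coeff m))
  have hcoeff : ∀ (j : Fin (finrank ℚ L)) (P : MvPolynomial (Fin n) L) (m : Fin n →₀ ℕ),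
      (Lam j P).coeff m = lam j (P.coeff m) := by
    intro j P m
    show (∑ m' ∈ P.support, MvPolynomial.monomial m' (lam j (P.coeff m'))).coeff m = _
    rw [MvPolynomial.coeff_sum]
    simp_rw [MvPolynomial.coeff_monomial]
    rw [Finset.sum_ite_eq' P.support m]
    by_cases h : m ∈ P.support
    · simp [h]
    · rw [if_neg h, MvPolynomial.notMem_support_iff.mp h, map_zero]
  -- trace of coefficients of a square
  have hple : ∀ (P : MvPolynomial (Fin n) L) (m : Fin n →₀ ℕ),
      Algebra.trace ℚ L ((P * P).coeff m) =
        ∑ j, c0 j * ((Lam j P * Lam j P).coeff m) := by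
    intro P m
    rw [MvPolynomial.coeff_mul, map_sum]
    have hstep : ∀ x ∈ Finset.HasAntidiagonal.antidiagonal m,
        Algebra.trace ℚ L (P.coeff x.1 * P.coeff x.2)
          = ∑ j, c0 j * ((Lam j P).coeff x.1 * (Lam j P).coeff x.2) := by
      intro x _
      rw [hdiag]
      exact Finset.sum_congr rfl fun j _ => by rw [hcoeff, hcoeff]; ring
    rw [Finset.sum_congr rfl hstep, Finset.sum_comm]
    refine Finset.sum_congr rfl fun j _ => ?_
    rw [MvPolynomial.coeff_mul, Finset.mul_sum]
  -- the data
  refine ⟨s * finrank ℚ L, fun i => c0 (finProdFinEquiv.symm i).2 / (finrank ℚ L : ℚ),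
    fun i => Lam (finProdFinEquiv.symm i).2 (p (finProdFinEquiv.symm i).1), ?_, ?_, ?_⟩
  · exact Nat.mul_le_mul_left s hrank
  · intro i
    dsimp only
    exact div_pos (hc0 _) (by exact_mod_cast hdpos)
  · apply MvPolynomial.ext
    intro m
    have h1 : algebraMap ℚ L (f.coeff m) = ∑ i, ((p i * p i).coeff m) := by
      have h := congrArg (MvPolynomial.coeff m) hf
      rw [MvPolynomial.coeff_map, MvPolynomial.coeff_sum] at h
      simp_rw [sq] at h
      exact h
    have h2 : (finrank ℚ L : ℚ) * f.coeff m =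
        ∑ i, ∑ j, c0 j * ((Lam j (p i) * Lam j (p i)).coeff m) := by
      have h := congrArg (Algebra.trace ℚ L) h1
      rw [Algebra.trace_algebraMap, map_sum] at h
      rw [show ((finrank ℚ L : ℚ) * f.coeff m) = finrank ℚ L • f.coeff m from by
        rw [nsmul_eq_mul], h]
      exact Finset.sum_congr rfl fun i _ => hple (p i) m
    rw [MvPolynomial.coeff_sum]
    simp_rw [MvPolynomial.coeff_smul, smul_eq_mul, sq]
    rw [← Equiv.sum_comp finProdFinEquiv
      (fun i => c0 (finProdFinEquiv.symm i).2 / (finrank ℚ L : ℚ) *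
        ((Lam (finProdFinEquiv.symm i).2 (p (finProdFinEquiv.symm i).1) *
          Lam (finProdFinEquiv.symm i).2 (p (finProdFinEquiv.symm i).1)).coeff m))]
    simp_rw [Equiv.symm_apply_apply]
    rw [Fintype.sum_prod_type]
    simp_rw [div_mul_eq_mul_div, ← Finset.sum_div]
    rw [← h2, mul_comm, mul_div_assoc, div_self hd0, mul_one]
end

section
/- Let F be a field of characteristic zero, let l be a positive integer, and let L = F(√l) be an extension of F generated by an element whose square is l. If f ∈ F[x₁,…,xₙ] is a rational sum of s squares in L[x₁,…,xₙ] (a sum Σ_{i=1}^s cᵢ pᵢ² with positive rational coefficients cᵢ and pᵢ ∈ L[x₁,…,xₙ]), then f is a rational sum of at most 2s squares in F[x₁,…,xₙ]. -/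
open MvPolynomial

/-- Quadratic descent step: let `F` be a field of characteristic zero, `l` a positive
integer, and `L = F(√l)` an extension of `F` generated by an element whose square is
`l`. If `f ∈ F[x₁,…,xₙ]` is a rational sum of `s` squares in `L[x₁,…,xₙ]` (a sum
`Σᵢ cᵢ pᵢ²` with positive rational coefficients `cᵢ`), then `f` is a rational sum of
at most `2s` squares in `F[x₁,…,xₙ]`. -/
theorem stmt_15 (n s : ℕ) (F : Type*) [Field F] [CharZero F]
    (l : ℕ) (hl : 0 < l)
    (L : Type*) [Field L] [Algebra F L]
    (sq : L) (hsq : sq ^ 2 = (l : L))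
    (hgen : IntermediateField.adjoin F {sq} = ⊤)
    (f : MvPolynomial (Fin n) F)
    (c : Fin s → ℚ) (hc : ∀ i, 0 < c i)
    (p : Fin s → MvPolynomial (Fin n) L)
    (hf : MvPolynomial.map (algebraMap F L) f =
      ∑ i, MvPolynomial.C ((c i : L)) * (p i) ^ 2) :
    ∃ (t : ℕ) (c' : Fin t → ℚ) (q : Fin t → MvPolynomial (Fin n) F),
      t ≤ 2 * s ∧ (∀ i, 0 < c' i) ∧
      f = ∑ i, MvPolynomial.C ((c' i : F)) * (q i) ^ 2 := by
  classical
  have hinj : Function.Injective (algebraMap F L) := (algebraMap F L).injective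
  by_cases hsur : ∃ y : F, algebraMap F L y = sq
  · -- then `L = F` essentially
    have hsurj : Function.Surjective (algebraMap F L) := by
      obtain ⟨y, hy⟩ := hsur
      intro x
      have hle : IntermediateField.adjoin F {sq} ≤ ⊥ := by
        rw [IntermediateField.adjoin_le_iff]
        intro z hz
        rw [Set.mem_singleton_iff] at hz
        subst hz
        rw [SetLike.mem_coe, IntermediateField.mem_bot]
        exact ⟨y, hy⟩
      have hx : x ∈ IntermediateField.adjoin F {sq} := hgen ▸ trivial
      have := hle hx
      rwa [IntermediateField.mem_bot] at this
    have hps : Function.Surjective (MvPolynomial.map (algebraMap F L) :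
        MvPolynomial (Fin n) F → MvPolynomial (Fin n) L) :=
      MvPolynomial.map_surjective _ hsurj
    choose q hq using fun i => hps (p i)
    refine ⟨s, c, q, by omega, hc, ?_⟩
    apply MvPolynomial.map_injective (algebraMap F L) hinj
    rw [hf, map_sum]
    refine Finset.sum_congr rfl fun i _ => ?_
    rw [map_mul, map_pow, hq, MvPolynomial.map_C, map_ratCast (algebraMap F L)]
  · -- honest quadratic extension
    -- decomposition of elements of L
    have hdec : ∀ x : L, ∃ a b : F, x = algebraMap F L a + algebraMap F L b * sq := by
      have hint : IsIntegral F sq := by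
        refine ⟨Polynomial.X ^ 2 - Polynomial.C ((l : F)), ?_, ?_⟩
        · exact Polynomial.monic_X_pow_sub_C _ (by norm_num)
        · simp [hsq]
      have halg : Algebra.adjoin F {sq} = ⊤ := by
        have h1 := IntermediateField.adjoin_simple_toSubalgebra_of_isAlgebraic hint.isAlgebraic
        rw [hgen] at h1
        rw [← h1]
        rfl
      intro x
      have hx : x ∈ Algebra.adjoin F {sq} := halg ▸ trivial
      induction hx using Algebra.adjoin_induction with
      | mem z hz =>
          rw [Set.mem_singleton_iff] at hz
          exact ⟨0, 1, by simp [hz]⟩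
      | algebraMap r => exact ⟨r, 0, by simp⟩
      | add x y _ _ hx hy =>
          obtain ⟨a1, b1, h1⟩ := hx
          obtain ⟨a2, b2, h2⟩ := hy
          exact ⟨a1 + a2, b1 + b2, by rw [h1, h2]; simp only [map_add]; ring⟩
      | mul x y _ _ hx hy =>
          obtain ⟨a1, b1, h1⟩ := hx
          obtain ⟨a2, b2, h2⟩ := hy
          refine ⟨a1 * a2 + l * b1 * b2, a1 * b2 + b1 * a2, ?_⟩
          rw [h1, h2]
          simp only [map_add, map_mul, map_natCast]
          linear_combination (algebraMap F L b1 * algebraMap F L b2) * hsq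
    -- uniqueness of the decomposition
    have huniq : ∀ a b a' b' : F,
        algebraMap F L a + algebraMap F L b * sq
          = algebraMap F L a' + algebraMap F L b' * sq → a = a' ∧ b = b' := by
      intro a b a' b' h
      by_cases hbb : b = b'
      · subst hbb
        refine ⟨hinj ?_, rfl⟩
        exact add_right_cancel h
      · exfalso
        apply hsur
        refine ⟨(a - a') / (b' - b), ?_⟩
        have hne : algebraMap F L b' - algebraMap F L b ≠ 0 := by
          rw [sub_ne_zero]
          exact fun hh => hbb (hinj hh).symm
        rw [map_div₀, map_sub, map_sub, div_eq_iff hne]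
        linear_combination h
    -- decomposition at the level of polynomials
    have hPdec : ∀ P : MvPolynomial (Fin n) L, ∃ a b : MvPolynomial (Fin n) F,
        P = MvPolynomial.map (algebraMap F L) a
          + MvPolynomial.map (algebraMap F L) b * MvPolynomial.C sq := by
      intro P
      induction P using MvPolynomial.induction_on with
      | C x =>
          obtain ⟨a0, b0, h⟩ := hdec x
          refine ⟨C a0, C b0, ?_⟩
          rw [h]
          simp [MvPolynomial.map_C, MvPolynomial.C_add, MvPolynomial.C_mul]
      | add P Q hP hQ =>
          obtain ⟨a1, b1, h1⟩ := hP
          obtain ⟨a2, b2, h2⟩ := hQ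
          refine ⟨a1 + a2, b1 + b2, ?_⟩
          rw [h1, h2]; simp only [map_add]; ring
      | mul_X P j hP =>
          obtain ⟨a1, b1, h1⟩ := hP
          refine ⟨a1 * X j, b1 * X j, ?_⟩
          rw [h1]; simp only [map_mul, MvPolynomial.map_X]; ring
    choose a b hab using fun i => hPdec (p i)
    -- key identity
    have hCsq : (MvPolynomial.C sq : MvPolynomial (Fin n) L) ^ 2
        = MvPolynomial.C ((l : L)) := by rw [← map_pow, hsq]
    set S1 : MvPolynomial (Fin n) F :=
      ∑ i, (C ((c i : F)) * (a i) ^ 2 + C (((c i * l : ℚ) : F)) * (b i) ^ 2) with hS1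
    set S2 : MvPolynomial (Fin n) F := ∑ i, C ((c i : F)) * (2 * a i * b i) with hS2
    have hmap : MvPolynomial.map (algebraMap F L) f
        = MvPolynomial.map (algebraMap F L) S1
          + MvPolynomial.map (algebraMap F L) S2 * MvPolynomial.C sq := by
      rw [hf, hS1, hS2, map_sum, map_sum, Finset.sum_mul, ← Finset.sum_add_distrib]
      refine Finset.sum_congr rfl fun i _ => ?_
      rw [hab i]
      simp only [map_add, map_mul, map_pow, MvPolynomial.map_C,
        map_ratCast (algebraMap F L), map_natCast (algebraMap F L),
        Rat.cast_mul, Rat.cast_natCast, MvPolynomial.C_mul, map_ofNat]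
      linear_combination (MvPolynomial.C ((c i : ℚ) : L)
        * (MvPolynomial.map (algebraMap F L) (b i)) ^ 2) * hCsq
    have hfS1 : f = S1 := by
      apply MvPolynomial.ext
      intro m
      have h1 := congrArg (MvPolynomial.coeff m) hmap
      rw [MvPolynomial.coeff_map, MvPolynomial.coeff_add, MvPolynomial.coeff_map,
        mul_comm (MvPolynomial.map (algebraMap F L) S2) (MvPolynomial.C sq),
        MvPolynomial.coeff_C_mul, MvPolynomial.coeff_map] at h1
      refine (huniq (MvPolynomial.coeff m f) 0 (MvPolynomial.coeff m S1)
        (MvPolynomial.coeff m S2) ?_).1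
      rw [map_zero, zero_mul, add_zero, h1]
      ring
    refine ⟨s + s, Fin.append c (fun i => c i * l), Fin.append a b, by omega, ?_, ?_⟩
    · intro i
      induction i using Fin.addCases with
      | left j => simpa using hc j
      | right j =>
          rw [Fin.append_right]
          exact mul_pos (hc j) (by exact_mod_cast hl)
    · rw [hfS1, hS1, Fin.sum_univ_add]
      rw [← Finset.sum_add_distrib]
      refine Finset.sum_congr rfl fun i _ => ?_
      simp only [Fin.append_left, ← Fin.natAdd_eq_addNat, Fin.append_right]
end
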